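/- arXiv:1906.10664 — 12 statements merged into one kernel-verified Lean document; each statement's English description precedes it below -/
import Mathlib

section
/- Fix real numbers μ > 0 and Δ ≥ 0 and positive integers k and c. Let X_1, …, X_k and X'_{i,j} (1 ≤ i ≤ k, 1 ≤ j ≤ c) be mutually independent random variables, each with distribution Exp(μ). For each i define the task completion time Y_i = X_i if X_i ≤ Δ, and Y_i = min(X_i, Δ + min_{1≤j≤c} X'_{i,j}) if X_i > Δ, and let the job completion time be T = max_{1≤i≤k} Y_i. Then for every t ≥ 0: P(T ≤ t) = (1 − e^{−μ t})^k if t ≤ Δ, and P(T ≤ t) = (1 − e^{−μ((c+1)(t−Δ)+Δ)})^k if t > Δ. -/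
open MeasureTheory ProbabilityTheory Real
open scoped ENNReal

lemma aux_lt_iInf_iff {c : ℕ} [Nonempty (Fin c)] (g : Fin c → ℝ) (a : ℝ) :
    a < ⨅ j, g j ↔ ∀ j, a < g j := by
  obtain ⟨j0, hj0⟩ := Finite.exists_min g
  have h : ⨅ j, g j = g j0 :=
    le_antisymm (ciInf_le (Set.Finite.bddBelow (Set.finite_range g)) j0) (le_ciInf hj0)
  rw [h]
  exact ⟨fun h' j => lt_of_lt_of_le h' (hj0 j), fun h' => h' j0⟩

/-- A job of `k` tasks with i.i.d. `Exp(μ)` execution times is launched at time 0; each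
task still running at time `Δ` is joined by `c` fresh i.i.d. `Exp(μ)` replicas, and a
task completes when any of its copies completes.  The job completion time `T` (max of
the task completion times) has CDF `(1 − e^{−μt})^k` for `t ≤ Δ` and
`(1 − e^{−μ((c+1)(t−Δ)+Δ)})^k` for `t > Δ`. -/
theorem stmt0
    {Ω : Type*} [MeasureSpace Ω] [IsProbabilityMeasure (ℙ : Measure Ω)]
    (μ : ℝ) (hμ : 0 < μ) (Δ : ℝ) (hΔ : 0 ≤ Δ)
    (k c : ℕ) (hk : 0 < k) (hc : 0 < c)
    (X : Fin k → Ω → ℝ) (X' : Fin k × Fin c → Ω → ℝ)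
    (hXm : ∀ i, Measurable (X i)) (hX'm : ∀ p, Measurable (X' p))
    (hindep : iIndepFun (Sum.elim X X') ℙ)
    (hX : ∀ i, ∀ t : ℝ, 0 ≤ t → ℙ {ω | t < X i ω} = ENNReal.ofReal (exp (-μ * t)))
    (hX' : ∀ p, ∀ t : ℝ, 0 ≤ t → ℙ {ω | t < X' p ω} = ENNReal.ofReal (exp (-μ * t)))
    (Y : Fin k → Ω → ℝ)
    (hY : ∀ i ω, Y i ω =
      if X i ω ≤ Δ then X i ω else min (X i ω) (Δ + ⨅ j : Fin c, X' (i, j) ω))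
    (T : Ω → ℝ) (hT : ∀ ω, T ω = ⨆ i, Y i ω) :
    ∀ t : ℝ, 0 ≤ t →
      (t ≤ Δ → ℙ {ω | T ω ≤ t} = ENNReal.ofReal ((1 - exp (-μ * t)) ^ k)) ∧
      (Δ < t → ℙ {ω | T ω ≤ t} =
        ENNReal.ofReal ((1 - exp (-μ * ((c + 1) * (t - Δ) + Δ))) ^ k)) := by
  classical
  haveI nek : Nonempty (Fin k) := ⟨⟨0, hk⟩⟩
  haveI nec : Nonempty (Fin c) := ⟨⟨0, hc⟩⟩
  -- probability of a "block rectangle"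
  have hblock : ∀ (i : Fin k) (C : Set ℝ) (D : Fin c → Set ℝ), MeasurableSet C →
      (∀ j, MeasurableSet (D j)) →
      ℙ (X i ⁻¹' C ∩ ⋂ j, X' (i, j) ⁻¹' D j)
        = ℙ (X i ⁻¹' C) * ∏ j, ℙ (X' (i, j) ⁻¹' D j) := by
    intro i C D hC hD
    set s : (Fin k ⊕ Fin k × Fin c) → Set Ω :=
      Sum.elim (fun i' => X i' ⁻¹' C) (fun p => X' p ⁻¹' D p.2) with hs
    set Tset : Finset (Fin k ⊕ Fin k × Fin c) :=
      insert (Sum.inl i) (Finset.univ.image (fun j => Sum.inr (i, j))) with hTset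
    have hmeas : ∀ a ∈ Tset,
        MeasurableSet[(inferInstance : MeasurableSpace ℝ).comap (Sum.elim X X' a)] (s a) := by
      rintro (i' | p) _
      · exact ⟨C, hC, rfl⟩
      · exact ⟨D p.2, hD p.2, rfl⟩
    have h1 := hindep.meas_biInter (S := Tset) (s := s) hmeas
    have h2 : (⋂ a ∈ Tset, s a) = X i ⁻¹' C ∩ ⋂ j, X' (i, j) ⁻¹' D j := by
      ext ω
      simp only [hTset, Finset.set_biInter_insert, Set.mem_inter_iff, Set.mem_iInter, hs]
      constructor
      · rintro ⟨h, h'⟩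
        refine ⟨h, fun j => ?_⟩
        have := h' (Sum.inr (i, j)) (Finset.mem_image_of_mem _ (Finset.mem_univ j))
        simpa using this
      · rintro ⟨h, h'⟩
        refine ⟨h, ?_⟩
        rintro a ha
        simp only [Finset.mem_image, Finset.mem_univ, true_and] at ha
        obtain ⟨j, rfl⟩ := ha
        simpa using h' j
    have h3 : ∏ a ∈ Tset, ℙ (s a) = ℙ (X i ⁻¹' C) * ∏ j, ℙ (X' (i, j) ⁻¹' D j) := by
      rw [hTset, Finset.prod_insert (by simp),
        Finset.prod_image (by intro a _ b _ h; simpa using h)]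
      rfl
    rw [← h2, h1, h3]
  -- the blocks are independent
  set pisys : Fin k → Set (Set Ω) := fun i =>
    {A | ∃ (C : Set ℝ) (D : Fin c → Set ℝ), MeasurableSet C ∧ (∀ j, MeasurableSet (D j)) ∧
      A = X i ⁻¹' C ∩ ⋂ j, X' (i, j) ⁻¹' D j} with hpisys
  have hle : ∀ i, MeasurableSpace.generateFrom (pisys i)
      ≤ (inferInstance : MeasurableSpace Ω) := by
    intro i
    refine MeasurableSpace.generateFrom_le ?_
    rintro A ⟨C, D, hC, hD, rfl⟩
    exact ((hXm i) hC).inter (MeasurableSet.iInter fun j => (hX'm (i, j)) (hD j))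
  have hiI : iIndep (fun i => MeasurableSpace.generateFrom (pisys i)) ℙ := by
    refine ProbabilityTheory.iIndepSets.iIndep
      (m := fun i => MeasurableSpace.generateFrom (pisys i)) hle pisys ?hpi (fun i => rfl) ?hind
    case hpi =>
      rintro i A ⟨C1, D1, hC1, hD1, rfl⟩ B ⟨C2, D2, hC2, hD2, rfl⟩ -
      refine ⟨C1 ∩ C2, fun j => D1 j ∩ D2 j, hC1.inter hC2,
        fun j => (hD1 j).inter (hD2 j), ?_⟩
      ext ω
      simp only [Set.mem_inter_iff, Set.mem_iInter, Set.mem_preimage]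
      aesop
    case hind =>
      rw [iIndepSets_iff]
      intro S f' hf'
      have hsel : ∀ i : Fin k, ∃ (C : Set ℝ) (D : Fin c → Set ℝ),
          MeasurableSet C ∧ (∀ j, MeasurableSet (D j)) ∧
          (i ∈ S → f' i = X i ⁻¹' C ∩ ⋂ j, X' (i, j) ⁻¹' D j) := by
        intro i
        by_cases hi : i ∈ S
        · obtain ⟨C, D, h1, h2, h3⟩ := hf' i hi
          exact ⟨C, D, h1, h2, fun _ => h3⟩
        · exact ⟨Set.univ, fun _ => Set.univ, .univ, fun _ => .univ, fun h => absurd h hi⟩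
      choose C D hC hD heq using hsel
      set s : (Fin k ⊕ Fin k × Fin c) → Set Ω :=
        Sum.elim (fun i => X i ⁻¹' C i) (fun p => X' p ⁻¹' D p.1 p.2) with hs
      set Tset : Finset (Fin k ⊕ Fin k × Fin c) :=
        S.image Sum.inl ∪ (S ×ˢ Finset.univ).image Sum.inr with hTset
      have hmeas : ∀ a ∈ Tset,
          MeasurableSet[(inferInstance : MeasurableSpace ℝ).comap (Sum.elim X X' a)] (s a) := by
        rintro (i | p) _
        · exact ⟨C i, hC i, rfl⟩
        · exact ⟨D p.1 p.2, hD p.1 p.2, rfl⟩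
      have h1 := hindep.meas_biInter (S := Tset) (s := s) hmeas
      have h2 : (⋂ a ∈ Tset, s a) = ⋂ i ∈ S, f' i := by
        ext ω
        simp only [Set.mem_iInter, hTset, Finset.mem_union, Finset.mem_image,
          Finset.mem_product, Finset.mem_univ, and_true]
        constructor
        · intro h i hi
          rw [heq i hi]
          refine ⟨h _ (Or.inl ⟨i, hi, rfl⟩), Set.mem_iInter.2 fun j => ?_⟩
          exact h (Sum.inr (i, j)) (Or.inr ⟨(i, j), hi, rfl⟩)
        · intro h a ha
          rcases ha with ⟨i, hi, rfl⟩ | ⟨p, hp, rfl⟩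
          · have := h i hi
            rw [heq i hi] at this
            exact this.1
          · have := h p.1 hp
            rw [heq p.1 hp] at this
            have := Set.mem_iInter.1 this.2 p.2
            simpa [hs] using this
      have hdisj : Disjoint (S.image Sum.inl)
          (((S ×ˢ (Finset.univ : Finset (Fin c))).image Sum.inr)) := by
        simp [Finset.disjoint_left]
      have h3 : ∏ a ∈ Tset, ℙ (s a) = ∏ i ∈ S, ℙ (f' i) := by
        rw [hTset, Finset.prod_union hdisj,
          Finset.prod_image (by intro a _ b _ h; simpa using h),
          Finset.prod_image (by intro a _ b _ h; simpa using h)]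
        have h4 : ∏ p ∈ S ×ˢ (Finset.univ : Finset (Fin c)), ℙ (s (Sum.inr p))
            = ∏ i ∈ S, ∏ j, ℙ (X' (i, j) ⁻¹' D i (j)) := by
          rw [Finset.prod_product]
          rfl
        rw [h4, ← Finset.prod_mul_distrib]
        refine Finset.prod_congr rfl fun i hi => ?_
        rw [heq i hi, hblock i (C i) (D i) (hC i) (hD i)]
        rfl
      rw [← h2, h1, h3]
  -- block-measurability of the random variables
  have hXmi : ∀ i, Measurable[MeasurableSpace.generateFrom (pisys i)] (X i) := by
    intro i
    rw [measurable_iff_comap_le]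
    intro s hs
    obtain ⟨C, hC, rfl⟩ := hs
    refine MeasurableSpace.measurableSet_generateFrom
      ⟨C, fun _ => Set.univ, hC, fun _ => .univ, by simp⟩
  have hX'mi : ∀ (i : Fin k) (j : Fin c),
      Measurable[MeasurableSpace.generateFrom (pisys i)] (X' (i, j)) := by
    intro i j
    rw [measurable_iff_comap_le]
    intro s hs
    obtain ⟨C, hC, rfl⟩ := hs
    refine MeasurableSpace.measurableSet_generateFrom
      ⟨Set.univ, fun j' => if j' = j then C else Set.univ, .univ,
        fun j' => by by_cases h : j' = j <;> simp [h, hC], ?_⟩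
    ext ω
    simp only [Set.mem_preimage, Set.mem_inter_iff, Set.mem_univ, true_and, Set.mem_iInter,
      Set.preimage_univ]
    constructor
    · intro h j'
      by_cases hj : j' = j
      · subst hj; simpa using h
      · simp [hj]
    · intro h
      have := h j
      simpa using this
  have hYmi : ∀ i, Measurable[MeasurableSpace.generateFrom (pisys i)] (Y i) := by
    intro i
    have hfe : Y i = fun ω =>
        if X i ω ≤ Δ then X i ω else min (X i ω) (Δ + ⨅ j, X' (i, j) ω) := funext (hY i)
    rw [hfe]
    exact Measurable.ite (measurableSet_le (hXmi i) measurable_const) (hXmi i)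
      ((hXmi i).min (measurable_const.add (Measurable.iInf fun j => hX'mi i j)))
  intro t ht
  set A : Fin k → Set Ω := fun i => {ω | Y i ω ≤ t} with hA
  have hAmi : ∀ i, MeasurableSet[MeasurableSpace.generateFrom (pisys i)] (A i) :=
    fun i => (hYmi i) measurableSet_Iic
  have hAm : ∀ i, MeasurableSet (A i) := fun i => hle i _ (hAmi i)
  have hprod : ℙ (⋂ i, A i) = ∏ i, ℙ (A i) := hiI.meas_iInter hAmi
  have hTeq : {ω | T ω ≤ t} = ⋂ i, A i := by
    ext ω
    simp only [Set.mem_setOf_eq, hT ω, Set.mem_iInter, hA]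
    exact ciSup_le_iff (Set.Finite.bddAbove (Set.finite_range _))
  have hTP : ℙ {ω | T ω ≤ t} = ∏ i, ℙ (A i) := by rw [hTeq, hprod]
  constructor
  · -- case t ≤ Δ
    intro htΔ
    have hnull : ℙ (⋃ p, {ω | X' p ω ≤ 0}) = 0 := by
      refine measure_iUnion_null fun p => ?_
      have h1 : {ω | X' p ω ≤ 0} = {ω | (0 : ℝ) < X' p ω}ᶜ := by ext ω; simp
      rw [h1, prob_compl_eq_zero_iff (measurableSet_lt measurable_const (hX'm p))]
      simpa using hX' p 0 le_rfl
    have hae : ∀ i, ℙ (A i) = ℙ {ω | X i ω ≤ t} := by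
      intro i
      refine measure_congr ?_
      rw [Filter.eventuallyEq_set]
      have hnm : ∀ᵐ ω ∂(ℙ : Measure Ω), ω ∉ ⋃ p, {ω | X' p ω ≤ 0} :=
        measure_eq_zero_iff_ae_notMem.1 hnull
      filter_upwards [hnm] with ω hω
      have hpos : ∀ p : Fin k × Fin c, 0 < X' p ω := by
        intro p
        by_contra h
        exact hω (Set.mem_iUnion.2 ⟨p, not_lt.1 h⟩)
      simp only [hA, Set.mem_setOf_eq, hY i ω]
      by_cases hXΔ : X i ω ≤ Δ
      · simp [hXΔ]
      · push_neg at hXΔ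
        rw [if_neg (not_le.2 hXΔ)]
        have h2 : ¬ X i ω ≤ t := not_le.2 (lt_of_le_of_lt htΔ hXΔ)
        have hinf : (0 : ℝ) < ⨅ j, X' (i, j) ω :=
          (aux_lt_iInf_iff _ _).2 fun j => hpos (i, j)
        have h3 : ¬ min (X i ω) (Δ + ⨅ j, X' (i, j) ω) ≤ t := by
          rw [min_le_iff]
          push_neg
          exact ⟨lt_of_le_of_lt htΔ hXΔ,
            lt_of_le_of_lt htΔ (lt_add_of_pos_right Δ hinf)⟩
        simp [h2, h3]
    have hXile : ∀ i, ℙ {ω | X i ω ≤ t} = ENNReal.ofReal (1 - exp (-μ * t)) := by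
      intro i
      have h1 : {ω | X i ω ≤ t} = {ω | t < X i ω}ᶜ := by ext ω; simp
      rw [h1, prob_compl_eq_one_sub (measurableSet_lt measurable_const (hXm i)), hX i t ht,
        ENNReal.ofReal_sub 1 (exp_nonneg _), ENNReal.ofReal_one]
    have hexple : exp (-μ * t) ≤ 1 := by
      rw [← Real.exp_zero]
      exact Real.exp_le_exp.2 (by nlinarith)
    rw [hTP]
    calc ∏ i, ℙ (A i) = ∏ _i : Fin k, ENNReal.ofReal (1 - exp (-μ * t)) :=
          Finset.prod_congr rfl fun i _ => (hae i).trans (hXile i)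
      _ = ENNReal.ofReal (1 - exp (-μ * t)) ^ k := by
          simp [Finset.prod_const]
      _ = ENNReal.ofReal ((1 - exp (-μ * t)) ^ k) := by
          rw [← ENNReal.ofReal_pow (by linarith)]
  · -- case Δ < t
    intro hΔt
    have hAc : ∀ i, (A i)ᶜ
        = X i ⁻¹' (Set.Ioi t) ∩ ⋂ j, X' (i, j) ⁻¹' (Set.Ioi (t - Δ)) := by
      intro i
      ext ω
      simp only [hA, Set.mem_compl_iff, Set.mem_setOf_eq, not_le, Set.mem_inter_iff,
        Set.mem_preimage, Set.mem_Ioi, Set.mem_iInter, hY i ω]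
      by_cases hXΔ : X i ω ≤ Δ
      · rw [if_pos hXΔ]
        have hnot : ¬ t < X i ω := not_lt.2 (hXΔ.trans hΔt.le)
        exact iff_of_false hnot (fun hcon => hnot hcon.1)
      · rw [if_neg hXΔ]
        push_neg at hXΔ
        rw [lt_min_iff]
        constructor
        · rintro ⟨h1, h2⟩
          exact ⟨h1, fun j =>
            (aux_lt_iInf_iff (fun j => X' (i, j) ω) (t - Δ)).1 (by linarith) j⟩
        · rintro ⟨h1, h2⟩
          refine ⟨h1, ?_⟩
          have := (aux_lt_iInf_iff (fun j => X' (i, j) ω) (t - Δ)).2 h2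
          linarith
    have hq : ∀ i, ℙ ((A i)ᶜ)
        = ENNReal.ofReal (exp (-μ * ((c + 1) * (t - Δ) + Δ))) := by
      intro i
      rw [hAc i, hblock i _ _ measurableSet_Ioi fun _ => measurableSet_Ioi]
      have e2 : ∏ j : Fin c, ℙ (X' (i, j) ⁻¹' Set.Ioi (t - Δ))
          = ENNReal.ofReal (exp (-μ * (t - Δ))) ^ c := by
        calc ∏ j : Fin c, ℙ (X' (i, j) ⁻¹' Set.Ioi (t - Δ))
            = ∏ _j : Fin c, ENNReal.ofReal (exp (-μ * (t - Δ))) :=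
              Finset.prod_congr rfl fun j _ => hX' (i, j) (t - Δ) (by linarith)
          _ = ENNReal.ofReal (exp (-μ * (t - Δ))) ^ c := by simp [Finset.prod_const]
      rw [e2, show ℙ (X i ⁻¹' Set.Ioi t) = ENNReal.ofReal (exp (-μ * t)) from hX i t ht,
        ← ENNReal.ofReal_pow (exp_nonneg _), ← ENNReal.ofReal_mul (exp_nonneg _)]
      congr 1
      rw [← Real.exp_nat_mul, ← Real.exp_add]
      congr 1
      ring
    have hPA : ∀ i, ℙ (A i)
        = ENNReal.ofReal (1 - exp (-μ * ((c + 1) * (t - Δ) + Δ))) := by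
      intro i
      have h1 : ℙ (A i) = 1 - ℙ ((A i)ᶜ) := by
        have := prob_compl_eq_one_sub (μ := ℙ) (hAm i).compl
        rwa [compl_compl] at this
      rw [h1, hq i, ENNReal.ofReal_sub 1 (exp_nonneg _), ENNReal.ofReal_one]
    have hexple : exp (-μ * ((c + 1) * (t - Δ) + Δ)) ≤ 1 := by
      have h0 : 0 ≤ ((c : ℝ) + 1) * (t - Δ) + Δ :=
        add_nonneg (mul_nonneg (by positivity) (by linarith)) hΔ
      have h1 : -μ * (((c : ℝ) + 1) * (t - Δ) + Δ) ≤ 0 := by nlinarith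
      simpa [Real.exp_zero] using Real.exp_le_exp.2 h1
    rw [hTP]
    calc ∏ i, ℙ (A i)
        = ∏ _i : Fin k, ENNReal.ofReal (1 - exp (-μ * ((c + 1) * (t - Δ) + Δ))) :=
          Finset.prod_congr rfl fun i _ => hPA i
      _ = ENNReal.ofReal (1 - exp (-μ * ((c + 1) * (t - Δ) + Δ))) ^ k := by
          simp [Finset.prod_const]
      _ = ENNReal.ofReal ((1 - exp (-μ * ((c + 1) * (t - Δ) + Δ))) ^ k) := by
          rw [← ENNReal.ofReal_pow (by linarith)]
end

section
/- Fix real numbers μ > 0 and Δ ≥ 0 and positive integers k and c. Let X_1, …, X_k and X'_{i,j} (1 ≤ i ≤ k, 1 ≤ j ≤ c) be mutually independent random variables, each with distribution Exp(μ). For each i define Y_i = X_i if X_i ≤ Δ, and Y_i = min(X_i, Δ + min_{1≤j≤c} X'_{i,j}) if X_i > Δ. Define the cost with task cancellation C^c = Σ_{i=1}^k [ X_i·1{X_i ≤ Δ} + (Δ + (c+1)(Y_i − Δ))·1{X_i > Δ} ] and the cost without task cancellation C = Σ_{i=1}^k [ X_i + 1{X_i > Δ}·Σ_{j=1}^c X'_{i,j}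 ]. Then E[C^c] = k/μ and E[C] = (1 + c e^{−μΔ})·k/μ. -/
open MeasureTheory ProbabilityTheory Real
open scoped ENNReal

lemma lt_iInf_fin {c : ℕ} (hc : 0 < c) (f : Fin c → ℝ) (a : ℝ) :
    a < ⨅ j, f j ↔ ∀ j, a < f j := by
  haveI : Nonempty (Fin c) := ⟨⟨0, hc⟩⟩
  obtain ⟨j₀, hj₀⟩ := Finite.exists_min f
  have h : ⨅ j, f j = f j₀ :=
    le_antisymm (ciInf_le (Finite.bddBelow_range f) j₀) (le_ciInf hj₀)
  rw [h]
  exact ⟨fun h j => lt_of_lt_of_le h (hj₀ j), fun h => h j₀⟩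

lemma exp_tail_lintegral {μ : ℝ} (hμ : 0 < μ) :
    ∫⁻ t in Set.Ioi (0:ℝ), ENNReal.ofReal (exp (-μ * t)) = ENNReal.ofReal (1/μ) := by
  rw [← ofReal_integral_eq_lintegral_ofReal (exp_neg_integrableOn_Ioi 0 hμ)
    (Filter.Eventually.of_forall fun x => (exp_pos _).le)]
  congr 1
  have := integral_comp_mul_left_Ioi (fun x => exp (-x)) 0 hμ
  simp only [mul_zero, smul_eq_mul] at this
  have h2 : ∀ x : ℝ, exp (-(μ * x)) = exp (-μ * x) := by intro x; ring_nf
  simp only [h2] at this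
  rw [this, integral_exp_neg_Ioi_zero]
  simp [one_div]

lemma tail_exp_integral {Ω : Type*} [MeasureSpace Ω] [IsProbabilityMeasure (ℙ : Measure Ω)]
    {μ : ℝ} (hμ : 0 < μ) {Z : Ω → ℝ} (hZm : AEMeasurable Z ℙ) (hZ0 : 0 ≤ᵐ[ℙ] Z)
    (htail : ∀ t : ℝ, 0 ≤ t → ℙ {ω | t < Z ω} = ENNReal.ofReal (exp (-μ * t))) :
    Integrable Z ℙ ∧ ∫ ω, Z ω = 1 / μ := by
  have key : ∫⁻ ω, ENNReal.ofReal (Z ω) = ENNReal.ofReal (1/μ) := by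
    rw [lintegral_eq_lintegral_meas_lt ℙ hZ0 hZm]
    rw [setLIntegral_congr_fun measurableSet_Ioi
      (fun t ht => htail t (le_of_lt ht))]
    exact exp_tail_lintegral hμ
  have hint : Integrable Z ℙ := by
    refine ⟨hZm.aestronglyMeasurable, ?_⟩
    rw [hasFiniteIntegral_iff_ofReal hZ0, key]
    exact ENNReal.ofReal_lt_top
  refine ⟨hint, ?_⟩
  rw [integral_eq_lintegral_of_nonneg_ae hZ0 hZm.aestronglyMeasurable, key,
    ENNReal.toReal_ofReal (by positivity)]

/-- A job of `k` tasks with i.i.d. `Exp(μ)` execution times is launched at time 0; each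
task still running at time `Δ` is joined by `c` fresh i.i.d. `Exp(μ)` replicas.  The
expected cost with task cancellation is `k/μ`, and the expected cost without task
cancellation is `(1 + c·e^{−μΔ})·k/μ`. -/
theorem stmt1
    {Ω : Type*} [MeasureSpace Ω] [IsProbabilityMeasure (ℙ : Measure Ω)]
    (μ : ℝ) (hμ : 0 < μ) (Δ : ℝ) (hΔ : 0 ≤ Δ)
    (k c : ℕ) (hk : 0 < k) (hc : 0 < c)
    (X : Fin k → Ω → ℝ) (X' : Fin k × Fin c → Ω → ℝ)
    (hXm : ∀ i, Measurable (X i)) (hX'm : ∀ p, Measurable (X' p))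
    (hindep : iIndepFun (Sum.elim X X') ℙ)
    (hX : ∀ i, ∀ t : ℝ, 0 ≤ t → ℙ {ω | t < X i ω} = ENNReal.ofReal (exp (-μ * t)))
    (hX' : ∀ p, ∀ t : ℝ, 0 ≤ t → ℙ {ω | t < X' p ω} = ENNReal.ofReal (exp (-μ * t)))
    (Y : Fin k → Ω → ℝ)
    (hY : ∀ i ω, Y i ω =
      if X i ω ≤ Δ then X i ω else min (X i ω) (Δ + ⨅ j : Fin c, X' (i, j) ω))
    (Cc C : Ω → ℝ)
    (hCc : ∀ ω, Cc ω = ∑ i, (if X i ω ≤ Δ then X i ω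
      else Δ + (c + 1) * (Y i ω - Δ)))
    (hC : ∀ ω, C ω = ∑ i, (X i ω
      + if Δ < X i ω then ∑ j : Fin c, X' (i, j) ω else 0)) :
    (∫ ω, Cc ω) = k / μ ∧ (∫ ω, C ω) = (1 + c * exp (-μ * Δ)) * (k / μ) := by
  classical
  haveI : Nonempty (Fin c) := ⟨⟨0, hc⟩⟩
  -- a.e. positivity
  have hXpos : ∀ i, ∀ᵐ ω ∂ℙ, 0 < X i ω := by
    intro i
    have h := hX i 0 le_rfl
    simp only [mul_zero, exp_zero, ENNReal.ofReal_one] at h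
    rw [ae_iff]
    have hc' : {ω | ¬ 0 < X i ω} = {ω | 0 < X i ω}ᶜ := rfl
    rw [hc', measure_compl (measurableSet_lt measurable_const (hXm i)) (measure_ne_top _ _), h]
    simp
  have hX'pos : ∀ p, ∀ᵐ ω ∂ℙ, 0 < X' p ω := by
    intro p
    have h := hX' p 0 le_rfl
    simp only [mul_zero, exp_zero, ENNReal.ofReal_one] at h
    rw [ae_iff]
    have hc' : {ω | ¬ 0 < X' p ω} = {ω | 0 < X' p ω}ᶜ := rfl
    rw [hc', measure_compl (measurableSet_lt measurable_const (hX'm p)) (measure_ne_top _ _), h]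
    simp
  have hG : ∀ᵐ ω ∂ℙ, ∀ p : Fin k × Fin c, 0 < X' p ω := ae_all_iff.mpr hX'pos
  -- independence product computation
  have keyprod : ∀ (i : Fin k) (a s : ℝ), 0 ≤ a → 0 ≤ s →
      ℙ ({ω | a < X i ω} ∩ ⋂ j : Fin c, {ω | s < X' (i, j) ω})
        = ENNReal.ofReal (exp (-μ * a)) * ENNReal.ofReal (exp (-μ * s)) ^ c := by
    intro i a s ha hs
    set S : Finset (Fin k ⊕ (Fin k × Fin c)) :=
      insert (Sum.inl i) (Finset.univ.image fun j : Fin c => Sum.inr (i, j)) with hS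
    set sets : (Fin k ⊕ (Fin k × Fin c)) → Set ℝ :=
      Sum.elim (fun _ => Set.Ioi a) (fun _ => Set.Ioi s) with hsets
    have hmeas : ∀ idx, idx ∈ S → MeasurableSet (sets idx) := by
      rintro (idx|idx) _ <;> exact measurableSet_Ioi
    have key := hindep.measure_inter_preimage_eq_mul S hmeas
    have hnotmem : Sum.inl i ∉ Finset.univ.image fun j : Fin c => Sum.inr (i, j) := by simp
    have hinj : Function.Injective
        fun j : Fin c => (Sum.inr (i, j) : Fin k ⊕ (Fin k × Fin c)) := by
      intro a b h; simpa using h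
    have hset : (⋂ idx ∈ S, Sum.elim X X' idx ⁻¹' sets idx)
        = {ω | a < X i ω} ∩ ⋂ j : Fin c, {ω | s < X' (i, j) ω} := by
      ext ω
      simp only [hS, Finset.mem_insert, Finset.mem_image, Set.mem_iInter, Set.mem_inter_iff,
        Set.mem_setOf_eq, Set.mem_preimage]
      constructor
      · intro h
        refine ⟨h _ (Or.inl rfl), fun j => ?_⟩
        have := h _ (Or.inr ⟨j, Finset.mem_univ j, rfl⟩)
        simpa [hsets] using this
      · rintro ⟨h1, h2⟩ idx (rfl | ⟨j, _, rfl⟩)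
        · simpa [hsets] using h1
        · simpa [hsets] using h2 j
    rw [hset] at key
    rw [key, Finset.prod_insert hnotmem, Finset.prod_image (fun a _ b _ h => hinj h)]
    have h1 : Sum.elim X X' (Sum.inl i) ⁻¹' sets (Sum.inl i) = {ω | a < X i ω} := by
      ext ω; simp [hsets]
    have h2 : ∀ j : Fin c, Sum.elim X X' (Sum.inr (i, j)) ⁻¹' sets (Sum.inr (i, j))
        = {ω | s < X' (i, j) ω} := by
      intro j; ext ω; simp [hsets]
    rw [h1, hX i a ha]
    congr 1
    rw [Finset.prod_congr rfl fun j _ => by rw [h2 j, hX' (i, j) s hs]]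
    simp [Finset.prod_const]
  -- the cancellation cost per task
  set W : Fin k → Ω → ℝ :=
    fun i ω => if X i ω ≤ Δ then X i ω else Δ + (c + 1) * (Y i ω - Δ) with hW
  have hYm : ∀ i, Measurable (Y i) := by
    intro i
    have : Y i = fun ω => if X i ω ≤ Δ then X i ω
        else min (X i ω) (Δ + ⨅ j : Fin c, X' (i, j) ω) := funext (hY i)
    rw [this]
    exact Measurable.ite (measurableSet_le (hXm i) measurable_const) (hXm i)
      ((hXm i).min (measurable_const.add (Measurable.iInf fun j => hX'm (i, j))))
  have hWm : ∀ i, Measurable (W i) := fun i =>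
    Measurable.ite (measurableSet_le (hXm i) measurable_const) (hXm i)
      (measurable_const.add (measurable_const.mul ((hYm i).sub measurable_const)))
  -- on the good set, Y i ≥ Δ when Δ < X i
  have hYge : ∀ i ω, (∀ p : Fin k × Fin c, 0 < X' p ω) → Δ < X i ω → Δ < Y i ω := by
    intro i ω hω hx
    rw [hY i ω, if_neg (not_le.mpr hx)]
    refine lt_min hx ?_
    have : (0:ℝ) < ⨅ j : Fin c, X' (i, j) ω := (lt_iInf_fin hc _ 0).mpr fun j => hω (i, j)
    linarith
  -- tail of W i
  have hWtail : ∀ i, ∀ t : ℝ, 0 ≤ t → ℙ {ω | t < W i ω} = ENNReal.ofReal (exp (-μ * t)) := by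
    intro i t ht
    by_cases htΔ : t < Δ
    · have hae : {ω | t < W i ω} =ᵐ[ℙ] {ω | t < X i ω} := by
        rw [Filter.eventuallyEq_set]
        filter_upwards [hG] with ω hω
        simp only [Set.mem_setOf_eq, hW]
        by_cases hx : X i ω ≤ Δ
        · simp [hx]
        · push_neg at hx
          rw [if_neg (not_le.mpr hx)]
          have hy := hYge i ω hω hx
          constructor
          · intro _; linarith
          · intro _
            have : (0:ℝ) < (c:ℝ) + 1 := by positivity
            nlinarith
      rw [measure_congr hae, hX i t ht]
    · push_neg at htΔ
      set s := (t - Δ) / (c + 1) with hs_def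
      have hc1 : (0:ℝ) < (c:ℝ) + 1 := by positivity
      have hs : 0 ≤ s := div_nonneg (by linarith) hc1.le
      have hts : t = Δ + ((c:ℝ) + 1) * s := by
        rw [hs_def]; field_simp; ring
      have hae : {ω | t < W i ω} =ᵐ[ℙ]
          (({ω | Δ + s < X i ω} ∩ ⋂ j : Fin c, {ω | s < X' (i, j) ω}) : Set Ω) := by
        rw [Filter.eventuallyEq_set]
        filter_upwards [hG] with ω hω
        simp only [Set.mem_setOf_eq, Set.mem_inter_iff, Set.mem_iInter, hW]
        constructor
        · intro h
          by_cases hx : X i ω ≤ Δ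
          · rw [if_pos hx] at h; linarith
          · push_neg at hx
            rw [if_neg (not_le.mpr hx)] at h
            have hsY : Δ + s < Y i ω := by nlinarith [hts]
            rw [hY i ω, if_neg (not_le.mpr hx)] at hsY
            have h1 := lt_of_lt_of_le hsY (min_le_left _ _)
            have h2 := lt_of_lt_of_le hsY (min_le_right _ _)
            have h3 : s < ⨅ j : Fin c, X' (i, j) ω := by linarith
            exact ⟨h1, fun j => lt_of_lt_of_le h3 (ciInf_le (Finite.bddBelow_range _) j)⟩
        · rintro ⟨h1, h2⟩
          have hx : Δ < X i ω := by linarith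
          rw [if_neg (not_le.mpr hx)]
          have hinf : s < ⨅ j : Fin c, X' (i, j) ω := (lt_iInf_fin hc _ s).mpr h2
          have hsY : Δ + s < Y i ω := by
            rw [hY i ω, if_neg (not_le.mpr hx)]
            exact lt_min h1 (by linarith)
          nlinarith [hts]
      rw [measure_congr hae, keyprod i (Δ + s) s (by linarith) hs,
        ← ENNReal.ofReal_pow (exp_pos _).le, ← ENNReal.ofReal_mul (exp_pos _).le,
        ← exp_nat_mul, ← exp_add]
      congr 2
      rw [hts]; push_cast; ring
  -- expectation of W i
  have hWexp : ∀ i, Integrable (W i) ℙ ∧ ∫ ω, W i ω = 1 / μ := by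
    intro i
    refine tail_exp_integral hμ (hWm i).aemeasurable ?_ (hWtail i)
    filter_upwards [hG, hXpos i] with ω hω hx
    simp only [hW, Pi.zero_apply]
    by_cases h : X i ω ≤ Δ
    · simpa [h] using hx.le
    · push_neg at h
      rw [if_neg (not_le.mpr h)]
      have hy := hYge i ω hω h
      have : (0:ℝ) < (c:ℝ) + 1 := by positivity
      nlinarith
  -- expectation of X i and X' p
  have hXexp : ∀ i, Integrable (X i) ℙ ∧ ∫ ω, X i ω = 1 / μ := fun i =>
    tail_exp_integral hμ (hXm i).aemeasurable
      (by filter_upwards [hXpos i] with ω h using h.le) (hX i)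
  have hX'exp : ∀ p, Integrable (X' p) ℙ ∧ ∫ ω, X' p ω = 1 / μ := fun p =>
    tail_exp_integral hμ (hX'm p).aemeasurable
      (by filter_upwards [hX'pos p] with ω h using h.le) (hX' p)
  constructor
  · -- cost with cancellation
    have hCc' : Cc = fun ω => ∑ i, W i ω := funext fun ω => hCc ω
    rw [hCc', integral_finset_sum _ fun i _ => (hWexp i).1]
    rw [Finset.sum_congr rfl fun i _ => (hWexp i).2]
    simp [Finset.sum_const]
    field_simp
  · -- cost without cancellation
    set ind : Fin k → Ω → ℝ := fun i ω => if Δ < X i ω then (1:ℝ) else 0 with hind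
    have hindind : ∀ i, ind i = Set.indicator {ω | Δ < X i ω} (fun _ => (1:ℝ)) := by
      intro i; funext ω
      by_cases h : Δ < X i ω <;> simp [hind, h, Set.indicator_apply]
    have hindmeas : ∀ i, MeasurableSet {ω | Δ < X i ω} := fun i =>
      measurableSet_lt measurable_const (hXm i)
    have hindint : ∀ i, Integrable (ind i) ℙ := by
      intro i; rw [hindind i]
      exact (integrable_const (1:ℝ)).indicator (hindmeas i)
    have hindintegral : ∀ i, ∫ ω, ind i ω = exp (-μ * Δ) := by
      intro i
      rw [hindind i]
      have : ∫ ω, Set.indicator {ω | Δ < X i ω} (fun _ => (1:ℝ)) ω ∂ℙ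
          = (ℙ {ω | Δ < X i ω}).toReal := by
        rw [integral_indicator (hindmeas i)]
        simp
        rfl
      rw [this, hX i Δ hΔ, ENNReal.toReal_ofReal (exp_pos _).le]
    have hindep_ij : ∀ (i : Fin k) (j : Fin c), IndepFun (ind i) (X' (i, j)) ℙ := by
      intro i j
      have h1 : IndepFun (X i) (X' (i, j)) ℙ := by
        have := hindep.indepFun (i := Sum.inl i) (j := Sum.inr (i, j)) (by simp)
        exact this
      have hφ : Measurable fun x : ℝ => if Δ < x then (1:ℝ) else 0 :=
        Measurable.ite measurableSet_Ioi measurable_const measurable_const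
      exact h1.comp hφ measurable_id
    have hprodint : ∀ (i : Fin k) (j : Fin c),
        Integrable (fun ω => ind i ω * X' (i, j) ω) ℙ := fun i j =>
      (hindep_ij i j).integrable_mul (hindint i) (hX'exp (i, j)).1
    have hprodval : ∀ (i : Fin k) (j : Fin c),
        ∫ ω, ind i ω * X' (i, j) ω = exp (-μ * Δ) * (1 / μ) := by
      intro i j
      have := (hindep_ij i j).integral_mul_eq_mul_integral (hindint i).aestronglyMeasurable
        (hX'exp (i, j)).1.aestronglyMeasurable
      calc ∫ ω, ind i ω * X' (i, j) ω = ∫ ω, (ind i * X' (i, j)) ω := rfl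
        _ = (∫ ω, ind i ω) * ∫ ω, X' (i, j) ω := this
        _ = exp (-μ * Δ) * (1 / μ) := by rw [hindintegral i, (hX'exp (i, j)).2]
    set T : Fin k → Ω → ℝ := fun i ω => X i ω + ∑ j : Fin c, ind i ω * X' (i, j) ω with hT
    have hTint : ∀ i : Fin k, Integrable (T i) ℙ := fun i =>
      (hXexp i).1.add (integrable_finset_sum _ fun j _ => hprodint i j)
    have hC' : C = fun ω => ∑ i, T i ω := by
      funext ω
      rw [hC ω]
      refine Finset.sum_congr rfl fun i _ => ?_
      simp only [hT]
      congr 1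
      by_cases h : Δ < X i ω <;> simp [hind, h]
    rw [hC', integral_finset_sum _ fun i _ => hTint i]
    have hterm : ∀ i : Fin k, ∫ ω, T i ω
        = 1 / μ + c * (exp (-μ * Δ) * (1 / μ)) := by
      intro i
      simp only [hT]
      rw [integral_add (hXexp i).1 (integrable_finset_sum _ fun j _ => hprodint i j),
        (hXexp i).2, integral_finset_sum _ fun j _ => hprodint i j,
        Finset.sum_congr rfl fun j _ => hprodval i j]
      simp [Finset.sum_const]
    rw [Finset.sum_congr rfl fun i _ => hterm i]
    simp [Finset.sum_const]
    field_simp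
end

section
/- Fix real numbers s > 0, μ > 0, Δ ≥ 0 and integers n > k ≥ 1. Let X_1, …, X_k and X'_1, …, X'_{n−k} be mutually independent random variables, each with distribution SExp(s, μ). Define the cost without task cancellation C = Σ_{i=1}^k X_i + 1{max_{1≤i≤k} X_i > Δ}·Σ_{j=1}^{n−k} X'_j. Then E[C] = n·(s + 1/μ) if Δ ≤ s, and E[C] = ( k + (n−k)·(1 − (1 − e^{−μ(Δ−s)})^k) )·(s + 1/μ) if Δ > s. -/
open MeasureTheory ProbabilityTheory Real
open scoped ENNReal

section SExpHelpers
open Set Filter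

lemma sexp_real_int {μ : ℝ} (hμ : 0 < μ) (s : ℝ) :
    IntegrableOn (fun t => exp (-μ * (t - s))) (Ioi s) ∧
    ∫ t in Ioi s, exp (-μ * (t - s)) = 1 / μ := by
  have hint : IntegrableOn (fun t => exp (-μ * (t - s))) (Ioi s) := by
    have h := (exp_neg_integrableOn_Ioi s hμ).const_mul (exp (μ * s))
    apply (integrableOn_congr_fun ?_ measurableSet_Ioi).mpr h
    intro t _
    simp only [← Real.exp_add]
    ring_nf
  refine ⟨hint, ?_⟩
  have hderiv : ∀ t ∈ Ici s, HasDerivAt (fun t => -exp (-μ * (t - s)) / μ)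
      (exp (-μ * (t - s))) t := by
    intro t _
    have h1 : HasDerivAt (fun t : ℝ => -μ * (t - s)) (-μ) t := by
      simpa using ((hasDerivAt_id t).sub_const s).const_mul (-μ)
    have h2 := (h1.exp).neg.div_const μ
    exact h2.congr_deriv (by rw [div_eq_iff hμ.ne']; ring)
  have htend : Tendsto (fun t => -exp (-μ * (t - s)) / μ) atTop (nhds 0) := by
    have h0 : Tendsto (fun t : ℝ => -μ * (t - s)) atTop atBot := by
      exact Tendsto.const_mul_atTop_of_neg (neg_neg_iff_pos.mpr hμ)
        (tendsto_atTop_add_const_right atTop (-s) tendsto_id)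
    have := (Real.tendsto_exp_atBot.comp h0).neg.div_const μ
    simpa using this
  have := integral_Ioi_of_hasDerivAt_of_tendsto' hderiv hint htend
  rw [this]; simp only [sub_self, mul_zero, Real.exp_zero, zero_sub, neg_neg]
  rw [neg_div, neg_neg, one_div]

lemma sexp_lint {s μ : ℝ} (hs : 0 < s) (hμ : 0 < μ) :
    ∫⁻ t in Ioi (0:ℝ), (if t < s then (1:ℝ≥0∞) else ENNReal.ofReal (exp (-μ * (t - s)))) =
      ENNReal.ofReal (s + 1 / μ) := by
  have hsplit : Ioi (0:ℝ) = Ioo 0 s ∪ Ici s := (Ioo_union_Ici_eq_Ioi hs).symm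
  have hdisj : Disjoint (Ioo (0:ℝ) s) (Ici s) := by
    apply disjoint_left.mpr
    intro t ht ht'
    exact absurd ht.2 (not_lt.mpr ht')
  rw [hsplit, lintegral_union measurableSet_Ici hdisj]
  have h1 : ∫⁻ t in Ioo (0:ℝ) s, (if t < s then (1:ℝ≥0∞) else ENNReal.ofReal (exp (-μ * (t - s))))
      = ENNReal.ofReal s := by
    rw [setLIntegral_congr_fun measurableSet_Ioo
      (fun t (ht : t ∈ Ioo 0 s) => if_pos ht.2)]
    simp [Real.volume_Ioo, hs.le]
  have h2 : ∫⁻ t in Ici s, (if t < s then (1:ℝ≥0∞) else ENNReal.ofReal (exp (-μ * (t - s))))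
      = ENNReal.ofReal (1 / μ) := by
    rw [setLIntegral_congr_fun measurableSet_Ici
      (fun t (ht : t ∈ Ici s) => if_neg (not_lt.mpr ht))]
    rw [← Measure.restrict_congr_set Ioi_ae_eq_Ici]
    rw [← ofReal_integral_eq_lintegral_ofReal (sexp_real_int hμ s).1
      (ae_of_all _ (fun t => (Real.exp_pos _).le))]
    rw [(sexp_real_int hμ s).2]
  rw [h1, h2, ← ENNReal.ofReal_add hs.le (by positivity)]

lemma sexp_exp {Ω : Type*} [MeasureSpace Ω] [IsProbabilityMeasure (ℙ : Measure Ω)]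
    {s μ : ℝ} (hs : 0 < s) (hμ : 0 < μ) {Y : Ω → ℝ} (hm : Measurable Y)
    (h : ∀ t : ℝ, ℙ {ω | t < Y ω} = if t < s then 1 else ENNReal.ofReal (exp (-μ * (t - s)))) :
    Integrable Y ∧ ∫ ω, Y ω = s + 1 / μ := by
  have hpos : ∀ᵐ ω, 0 < Y ω := by
    have h0 := h 0
    rw [if_pos hs] at h0
    rw [ae_iff]
    have : {ω | ¬ 0 < Y ω} = {ω | 0 < Y ω}ᶜ := rfl
    rw [this, prob_compl_eq_zero_iff (measurableSet_lt measurable_const hm)]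
    exact h0
  have hlint : ∫⁻ ω, ENNReal.ofReal (Y ω) = ENNReal.ofReal (s + 1 / μ) := by
    rw [lintegral_eq_lintegral_meas_lt ℙ (hpos.mono fun ω h => h.le) hm.aemeasurable]
    simp_rw [h]
    exact sexp_lint hs hμ
  have hint : Integrable Y := by
    refine ⟨hm.aestronglyMeasurable, ?_⟩
    rw [hasFiniteIntegral_iff_norm]
    have : ∫⁻ ω, ENNReal.ofReal ‖Y ω‖ = ∫⁻ ω, ENNReal.ofReal (Y ω) := by
      apply lintegral_congr_ae
      filter_upwards [hpos] with ω hω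
      rw [Real.norm_eq_abs, abs_of_pos hω]
    rw [this, hlint]
    exact ENNReal.ofReal_lt_top
  refine ⟨hint, ?_⟩
  rw [integral_eq_lintegral_of_nonneg_ae (hpos.mono fun ω h => h.le) hm.aestronglyMeasurable,
    hlint, ENNReal.toReal_ofReal (by positivity)]

end SExpHelpers

/-- A job of `k` tasks with i.i.d. `SExp(s, μ)` execution times is launched at time 0;
if the job is not complete at time `Δ`, `n − k` i.i.d. `SExp(s, μ)` coded tasks are
launched, and every launched task runs to completion.  The expected cost is
`n(s + 1/μ)` if `Δ ≤ s`, and `(k + (n−k)(1 − (1 − e^{−μ(Δ−s)})^k))(s + 1/μ)` if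
`Δ > s`. -/
theorem stmt4
    {Ω : Type*} [MeasureSpace Ω] [IsProbabilityMeasure (ℙ : Measure Ω)]
    (s μ : ℝ) (hs : 0 < s) (hμ : 0 < μ) (Δ : ℝ) (hΔ : 0 ≤ Δ)
    (n k : ℕ) (hk : 1 ≤ k) (hkn : k < n)
    (X : Fin k → Ω → ℝ) (X' : Fin (n - k) → Ω → ℝ)
    (hXm : ∀ i, Measurable (X i)) (hX'm : ∀ j, Measurable (X' j))
    (hindep : iIndepFun (Sum.elim X X') ℙ)
    (hX : ∀ i, ∀ t : ℝ, ℙ {ω | t < X i ω} =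
      if t < s then 1 else ENNReal.ofReal (exp (-μ * (t - s))))
    (hX' : ∀ j, ∀ t : ℝ, ℙ {ω | t < X' j ω} =
      if t < s then 1 else ENNReal.ofReal (exp (-μ * (t - s))))
    (C : Ω → ℝ)
    (hC : ∀ ω, C ω = (∑ i, X i ω)
      + if Δ < ⨆ i, X i ω then ∑ j, X' j ω else 0) :
    (Δ ≤ s → (∫ ω, C ω) = n * (s + 1 / μ)) ∧
    (s < Δ → (∫ ω, C ω) =
      (k + (n - k : ℝ) * (1 - (1 - exp (-μ * (Δ - s))) ^ k)) * (s + 1 / μ)) := by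
  haveI : Nonempty (Fin k) := Fin.pos_iff_nonempty.mp hk
  set m := s + 1 / μ with hmdef
  have hXe : ∀ i, Integrable (X i) ∧ ∫ ω, X i ω = m := fun i => sexp_exp hs hμ (hXm i) (hX i)
  have hX'e : ∀ j, Integrable (X' j) ∧ ∫ ω, X' j ω = m := fun j => sexp_exp hs hμ (hX'm j) (hX' j)
  set A : Set Ω := {ω | Δ < ⨆ i, X i ω} with hAdef
  have hbdd : ∀ ω, BddAbove (Set.range fun i => X i ω) := fun ω => (Set.finite_range _).bddAbove
  have hAeq : A = ⋃ i, X i ⁻¹' Set.Ioi Δ := by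
    ext ω
    simp only [hAdef, Set.mem_setOf_eq, Set.mem_iUnion, Set.mem_preimage, Set.mem_Ioi]
    exact lt_ciSup_iff (hbdd ω)
  have hA : MeasurableSet A := by
    rw [hAeq]; exact MeasurableSet.iUnion fun i => (hXm i) measurableSet_Ioi
  have hAc : Aᶜ = ⋂ i, X i ⁻¹' Set.Iic Δ := by
    rw [hAeq, Set.compl_iUnion]
    apply Set.iInter_congr
    intro i
    ext ω; simp
  have hcdf : ∀ i : Fin k, ℙ (X i ⁻¹' Set.Iic Δ) =
      1 - (if Δ < s then 1 else ENNReal.ofReal (exp (-μ * (Δ - s)))) := by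
    intro i
    have h1 : X i ⁻¹' Set.Iic Δ = {ω | Δ < X i ω}ᶜ := by ext ω; simp
    rw [h1, prob_compl_eq_one_sub (measurableSet_lt measurable_const (hXm i)), hX i Δ]
  have hmeasS : ∀ j, Measurable (Sum.elim X X' j) := by
    rintro (i | j); exacts [hXm i, hX'm j]
  -- product formula for the complement
  have hprod : ℙ (⋂ i, X i ⁻¹' Set.Iic Δ) = ∏ i : Fin k, ℙ (X i ⁻¹' Set.Iic Δ) := by
    have h := hindep.meas_biInter (S := Finset.univ.map ⟨Sum.inl, Sum.inl_injective⟩)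
      (s := fun j => Sum.elim X X' j ⁻¹' Set.Iic Δ)
      (fun j _ => ⟨Set.Iic Δ, measurableSet_Iic, rfl⟩)
    rw [Finset.prod_map] at h
    have hseteq : (⋂ j ∈ Finset.univ.map (⟨Sum.inl, Sum.inl_injective⟩ :
        Fin k ↪ Fin k ⊕ Fin (n - k)), Sum.elim X X' j ⁻¹' Set.Iic Δ)
        = ⋂ i, X i ⁻¹' Set.Iic Δ := by
      ext ω
      simp [Finset.mem_map]
    rw [hseteq] at h
    simpa using h
  have hPA : ℙ A = 1 - ∏ i : Fin k, ℙ (X i ⁻¹' Set.Iic Δ) := by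
    calc ℙ A = ℙ Aᶜᶜ := by rw [compl_compl]
    _ = 1 - ℙ Aᶜ := prob_compl_eq_one_sub hA.compl
    _ = 1 - ∏ i : Fin k, ℙ (X i ⁻¹' Set.Iic Δ) := by rw [hAc, hprod]
  -- independence of the indicator and the parity sum
  have hIF := hindep.indepFun_finset (Finset.univ.map ⟨Sum.inl, Sum.inl_injective⟩)
    (Finset.univ.map ⟨Sum.inr, Sum.inr_injective⟩) (by
      rw [Finset.disjoint_left]
      rintro a ha hb
      simp only [Finset.mem_map, Finset.mem_univ, Function.Embedding.coeFn_mk, true_and] at ha hb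
      obtain ⟨i, rfl⟩ := ha
      obtain ⟨j, hj⟩ := hb
      exact Sum.inr_ne_inl hj) hmeasS
  set S1 := Finset.univ.map (⟨Sum.inl, Sum.inl_injective⟩ : Fin k ↪ Fin k ⊕ Fin (n - k)) with hS1
  set S2 := Finset.univ.map (⟨Sum.inr, Sum.inr_injective⟩ : Fin (n - k) ↪ Fin k ⊕ Fin (n - k))
    with hS2
  set B : Set ({x // x ∈ S1} → ℝ) := ⋃ i : Fin k,
    {v | Δ < v ⟨Sum.inl i, (Finset.mem_map' _).mpr (Finset.mem_univ i)⟩} with hB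
  set F : ({x // x ∈ S1} → ℝ) → ℝ := B.indicator fun _ => 1 with hF
  set G : ({x // x ∈ S2} → ℝ) → ℝ := fun v => ∑ j : Fin (n - k),
    v ⟨Sum.inr j, (Finset.mem_map' _).mpr (Finset.mem_univ j)⟩ with hG
  have hBmeas : MeasurableSet B :=
    MeasurableSet.iUnion fun i => measurableSet_lt measurable_const (measurable_pi_apply _)
  have hFmeas : Measurable F := measurable_const.indicator hBmeas
  have hGmeas : Measurable G :=
    Finset.measurable_sum _ fun j _ => measurable_pi_apply _
  have hcomp := hIF.comp hFmeas hGmeas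
  have hFφ : ∀ ω, F (fun i : {x // x ∈ S1} => Sum.elim X X' i ω)
      = if Δ < ⨆ i, X i ω then (1:ℝ) else 0 := by
    intro ω
    classical
    simp only [hF]
    rw [Set.indicator_apply]
    have hiff : ((fun i : {x // x ∈ S1} => Sum.elim X X' i ω) ∈ B) ↔ Δ < ⨆ i, X i ω := by
      simp only [hB, Set.mem_iUnion, Set.mem_setOf_eq, Sum.elim_inl]
      exact (lt_ciSup_iff (hbdd ω)).symm
    simp only [hiff]
  have hGψ : ∀ ω, G (fun j : {x // x ∈ S2} => Sum.elim X X' j ω) = ∑ j, X' j ω := fun ω => rfl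
  have hX'sum : Integrable (fun ω => ∑ j, X' j ω) :=
    integrable_finset_sum _ fun j _ => (hX'e j).1
  have hmul_int : Integrable (fun ω =>
      F (fun i : {x // x ∈ S1} => Sum.elim X X' i ω)
      * G (fun j : {x // x ∈ S2} => Sum.elim X X' j ω)) := by
    apply Integrable.bdd_mul (c := 1)
    · exact (integrable_congr (Filter.Eventually.of_forall fun ω => (hGψ ω).symm)).mp hX'sum
    · exact (hFmeas.comp (by exact measurable_pi_lambda _ fun i => hmeasS i)).aestronglyMeasurable
    · refine Filter.Eventually.of_forall fun ω => ?_
      rw [hFφ ω]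
      split <;> simp
  have hintF : ∫ ω, F (fun i : {x // x ∈ S1} => Sum.elim X X' i ω) = (ℙ A).toReal := by
    have h1 : (fun ω => F (fun i : {x // x ∈ S1} => Sum.elim X X' i ω))
        = A.indicator fun _ => (1:ℝ) := by
      funext ω
      rw [hFφ ω, Set.indicator_apply]
      rfl
    rw [h1, integral_indicator_const (1:ℝ) hA, smul_eq_mul, mul_one, measureReal_def]
  have hintG : ∫ ω, G (fun j : {x // x ∈ S2} => Sum.elim X X' j ω) = (n - k : ℕ) * m := by
    simp only [hGψ]
    rw [integral_finset_sum _ fun j _ => (hX'e j).1]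
    simp [fun j : Fin (n - k) => (hX'e j).2, mul_comm]
  have hintX : ∫ ω, ∑ i, X i ω = k * m := by
    rw [integral_finset_sum _ fun i _ => (hXe i).1]
    simp [fun i : Fin k => (hXe i).2, mul_comm]
  have hmain : ∫ ω, C ω = k * m + (ℙ A).toReal * ((n - k : ℕ) * m) := by
    have hCeq : ∀ ω, C ω = (∑ i, X i ω) +
        F (fun i : {x // x ∈ S1} => Sum.elim X X' i ω)
        * G (fun j : {x // x ∈ S2} => Sum.elim X X' j ω) := by
      intro ω
      rw [hC ω, hFφ ω, hGψ ω]
      split <;> simp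
    calc ∫ ω, C ω = ∫ ω, ((∑ i, X i ω) +
        F (fun i : {x // x ∈ S1} => Sum.elim X X' i ω)
        * G (fun j : {x // x ∈ S2} => Sum.elim X X' j ω)) :=
          integral_congr_ae (Filter.Eventually.of_forall hCeq)
    _ = (∫ ω, ∑ i, X i ω) + ∫ ω,
        F (fun i : {x // x ∈ S1} => Sum.elim X X' i ω)
        * G (fun j : {x // x ∈ S2} => Sum.elim X X' j ω) :=
          integral_add (integrable_finset_sum _ fun i _ => (hXe i).1) hmul_int
    _ = k * m + (ℙ A).toReal * ((n - k : ℕ) * m) := by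
          have hmul : ∫ ω, (F ∘ fun a (i : {x // x ∈ S1}) => Sum.elim X X' (↑i) a) ω * (G ∘ fun a (j : {x // x ∈ S2}) => Sum.elim X X' (↑j) a) ω = MeasureTheory.integral ℙ (F ∘ fun a (i : {x // x ∈ S1}) => Sum.elim X X' (↑i) a) * MeasureTheory.integral ℙ (G ∘ fun a (j : {x // x ∈ S2}) => Sum.elim X X' (↑j) a) := hcomp.integral_mul_eq_mul_integral (hFmeas.comp (measurable_pi_lambda _ fun i =>
            hmeasS i)).aestronglyMeasurable (hGmeas.comp (measurable_pi_lambda _ fun j =>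
            hmeasS j)).aestronglyMeasurable
          simp only [Function.comp_apply] at hmul
          rw [hintX, hmul]
          have e1 : MeasureTheory.integral ℙ (F ∘ fun a (i : {x // x ∈ S1}) =>
            Sum.elim X X' (↑i) a) = (ℙ A).toReal := hintF
          have e2 : MeasureTheory.integral ℙ (G ∘ fun a (j : {x // x ∈ S2}) =>
            Sum.elim X X' (↑j) a) = ((n - k : ℕ) : ℝ) * m := hintG
          rw [e1, e2]
  have hmpos : (0:ℝ) < m := by positivity
  constructor
  · intro hΔs
    have hsurv : (if Δ < s then (1:ℝ≥0∞) else ENNReal.ofReal (exp (-μ * (Δ - s)))) = 1 := by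
      rcases lt_or_eq_of_le hΔs with h | h
      · rw [if_pos h]
      · rw [if_neg (by simp [h]), h]
        simp
    have hPA1 : ℙ A = 1 := by
      rw [hPA]
      have : ∀ i : Fin k, ℙ (X i ⁻¹' Set.Iic Δ) = 0 := by
        intro i; rw [hcdf i, hsurv, tsub_self]
      simp [this, Finset.prod_const, zero_pow (by omega : k ≠ 0)]
    rw [hmain, hPA1]
    have : ((n - k : ℕ) : ℝ) = (n : ℝ) - k := by
      push_cast [Nat.cast_sub hkn.le]; ring
    rw [this]
    simp only [ENNReal.toReal_one]
    ring
  · intro hsΔ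
    set e := exp (-μ * (Δ - s)) with he
    have he0 : 0 < e := Real.exp_pos _
    have he1 : e ≤ 1 := by
      rw [he, Real.exp_le_one_iff]
      nlinarith
    have h1e : 0 ≤ 1 - e := by linarith
    have hcdf' : ∀ i : Fin k, ℙ (X i ⁻¹' Set.Iic Δ) = ENNReal.ofReal (1 - e) := by
      intro i
      rw [hcdf i, if_neg (not_lt.mpr hsΔ.le), ENNReal.ofReal_sub _ he0.le,
        ENNReal.ofReal_one]
    have hprodval : ∏ i : Fin k, ℙ (X i ⁻¹' Set.Iic Δ) = ENNReal.ofReal ((1 - e) ^ k) := by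
      simp [hcdf', Finset.prod_const, ENNReal.ofReal_pow h1e]
    have hpk1 : (1 - e) ^ k ≤ 1 := pow_le_one₀ h1e (by linarith)
    have hpk0 : 0 ≤ (1 - e) ^ k := pow_nonneg h1e k
    have hPAval : (ℙ A).toReal = 1 - (1 - e) ^ k := by
      rw [hPA, hprodval, ← ENNReal.ofReal_one, ← ENNReal.ofReal_sub _ hpk0,
        ENNReal.toReal_ofReal (by linarith)]
    rw [hmain, hPAval]
    have : ((n - k : ℕ) : ℝ) = (n : ℝ) - k := by
      push_cast [Nat.cast_sub hkn.le]; ring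
    rw [this]
    ring
end

section
/- Let α > 1 be real and let k ≥ 2 and c ≥ 1 be integers, and set n = (c+1)k. Then s·(n!/(n−k)!)·Γ(n−k+1−1/α)/Γ(n+1−1/α) < s·k!·Γ(1 − 1/((c+1)α)) / Γ(k + 1 − 1/((c+1)α)) for every s > 0. Equivalently, the expected latency of launching a job of k tasks with i.i.d. Pareto(s, α) execution times together with kc MDS-coded tasks (the expected k-th smallest of n i.i.d. Pareto(s, α) variables) is strictly smaller than the expected latency of launching it with c replicas per task (the expected maximum over k independent minima of c+1 i.i.d. Pareto(s, α) variables). -/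
open Real

lemma my_gamma_add_nat (x : ℝ) (hx : 0 < x) (m : ℕ) :
    Gamma (x + m) = (∏ i ∈ Finset.range m, (x + i)) * Gamma x := by
  induction m with
  | zero => simp
  | succ m ih =>
    have hxm : x + (m : ℝ) ≠ 0 := by positivity
    have h : x + ((m + 1 : ℕ) : ℝ) = (x + m) + 1 := by push_cast; ring
    rw [h, Gamma_add_one hxm, ih, Finset.prod_range_succ]
    ring

lemma my_fact_add (m k : ℕ) :
    (m + k).factorial = m.factorial * ∏ i ∈ Finset.range k, (m + 1 + i) := by
  induction k with
  | zero => simp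
  | succ k ih =>
    rw [Finset.prod_range_succ, ← mul_assoc, ← ih, ← Nat.add_assoc, Nat.factorial_succ]
    ring

lemma my_ratio_le (a u v : ℝ) (ha : 0 < a) (hav : a < v) (hvu : v ≤ u) :
    u / (u - a) ≤ v / (v - a) := by
  have h1 : 0 < v - a := by linarith
  have h2 : 0 < u - a := by linarith
  rw [div_le_div_iff₀ h2 h1]
  nlinarith

lemma my_ratio_lt (a u v : ℝ) (ha : 0 < a) (hav : a < v) (hvu : v < u) :
    u / (u - a) < v / (v - a) := by
  have h1 : 0 < v - a := by linarith
  have h2 : 0 < u - a := by linarith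
  rw [div_lt_div_iff₀ h2 h1]
  nlinarith

set_option maxHeartbeats 1000000 in
/-- Executing a job of `k` tasks with `k*c` MDS-coded redundant tasks achieves strictly
smaller expected latency than executing it with `c` replicas per task, when task
execution times are i.i.d. `Pareto(s, α)`. -/
theorem stmt8 (α : ℝ) (hα : 1 < α) (k c : ℕ) (hk : 2 ≤ k) (hc : 1 ≤ c)
    (n : ℕ) (hn : n = (c + 1) * k) (s : ℝ) (hs : 0 < s) :
    s * ((n.factorial : ℝ) / ((n - k).factorial : ℝ)) *
        Gamma ((n : ℝ) - k + 1 - 1 / α) / Gamma ((n : ℝ) + 1 - 1 / α)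
      < s * (k.factorial : ℝ) * Gamma (1 - 1 / ((c + 1) * α)) /
          Gamma ((k : ℝ) + 1 - 1 / ((c + 1) * α)) := by
  have hα0 : (0:ℝ) < α := by linarith
  set a : ℝ := 1 / α with ha_def
  have ha0 : 0 < a := by positivity
  have ha1 : a < 1 := by rw [ha_def, div_lt_one hα0]; linarith
  set b : ℝ := 1 / ((c + 1) * α) with hb_def
  have hc1 : (0:ℝ) < (c:ℝ) + 1 := by positivity
  have hb0 : 0 < b := by rw [hb_def]; positivity
  have hb : ((c:ℝ) + 1) * b = a := by
    rw [hb_def, ha_def]; field_simp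
  have hb1 : b < 1 := by
    rw [hb_def, div_lt_one (by positivity)]
    have hcc : (1:ℝ) ≤ c := by exact_mod_cast hc
    nlinarith
  have hkn : k ≤ n := by rw [hn]; exact Nat.le_mul_of_pos_left k (by omega)
  set m : ℕ := n - k with hm_def
  have hmk : m + k = n := Nat.sub_add_cancel hkn
  have hmck : m = c * k := by
    have h' : n = c * k + k := by rw [hn]; ring
    omega
  have hcastn : (n : ℝ) = (m : ℝ) + k := by rw [← hmk]; push_cast; ring
  -- x and y
  set x : ℝ := (m : ℝ) + 1 - a with hx_def
  have hx0 : 0 < x := by have : (0:ℝ) ≤ m := Nat.cast_nonneg m; simp only [hx_def]; linarith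
  set y : ℝ := 1 - b with hy_def
  have hy0 : 0 < y := by simp only [hy_def]; linarith
  -- rewrite Gammas
  have hG1 : Gamma ((n : ℝ) - k + 1 - 1 / α) = Gamma x := by
    rw [hcastn, hx_def, ha_def]; ring_nf
  have hG2 : Gamma ((n : ℝ) + 1 - 1 / α)
      = (∏ i ∈ Finset.range k, (x + i)) * Gamma x := by
    rw [← my_gamma_add_nat x hx0 k]
    congr 1
    rw [hcastn, hx_def, ha_def]; ring
  have hG3 : Gamma (1 - 1 / ((c + 1) * α)) = Gamma y := rfl
  have hG4 : Gamma ((k : ℝ) + 1 - 1 / ((c + 1) * α))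
      = (∏ i ∈ Finset.range k, (y + i)) * Gamma y := by
    rw [← my_gamma_add_nat y hy0 k]
    congr 1
    rw [hy_def, hb_def]; ring
  -- factorials
  have hF1 : (n.factorial : ℝ)
      = (m.factorial : ℝ) * ∏ i ∈ Finset.range k, ((m : ℝ) + 1 + i) := by
    rw [← hmk, my_fact_add]; push_cast; ring
  have hF2 : (k.factorial : ℝ) = ∏ i ∈ Finset.range k, (1 + (i : ℝ)) := by
    have := my_fact_add 0 k
    simp only [Nat.zero_add, Nat.factorial_zero, one_mul] at this
    rw [this]; push_cast; ring
  have hGx : 0 < Gamma x := Gamma_pos_of_pos hx0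
  have hGy : 0 < Gamma y := Gamma_pos_of_pos hy0
  have hmfac : (0:ℝ) < (m.factorial : ℝ) := by exact_mod_cast m.factorial_pos
  -- show (n-k)! = m!
  have hnk : ((n - k).factorial : ℝ) = (m.factorial : ℝ) := by rw [← hm_def]
  rw [hG1, hG2, hG3, hG4, hF1, hF2, hnk]
  -- simplify
  have hPx : 0 < ∏ i ∈ Finset.range k, (x + i) := by
    apply Finset.prod_pos; intro i _; have : (0:ℝ) ≤ i := Nat.cast_nonneg i; linarith
  have hPy : 0 < ∏ i ∈ Finset.range k, (y + i) := by
    apply Finset.prod_pos; intro i _; have : (0:ℝ) ≤ i := Nat.cast_nonneg i; linarith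
  have hL : s * ((m.factorial : ℝ) * (∏ i ∈ Finset.range k, ((m : ℝ) + 1 + i)) / (m.factorial : ℝ))
        * Gamma x / ((∏ i ∈ Finset.range k, (x + i)) * Gamma x)
      = s * ∏ i ∈ Finset.range k, (((m : ℝ) + 1 + i) / (x + i)) := by
    rw [Finset.prod_div_distrib]
    field_simp
  have hR : s * (∏ i ∈ Finset.range k, (1 + (i : ℝ))) * Gamma y
        / ((∏ i ∈ Finset.range k, (y + i)) * Gamma y)
      = s * ∏ i ∈ Finset.range k, ((1 + (i : ℝ)) / (y + i)) := by
    rw [Finset.prod_div_distrib]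
    field_simp
  rw [hL, hR]
  apply mul_lt_mul_of_pos_left _ hs
  -- termwise comparison
  have key : ∀ i ∈ Finset.range k,
      ((m : ℝ) + 1 + i) / (x + i) ≤ (1 + (i : ℝ)) / (y + i) ∧
      (i + 1 < k → ((m : ℝ) + 1 + i) / (x + i) < (1 + (i : ℝ)) / (y + i)) := by
    intro i hi
    rw [Finset.mem_range] at hi
    have hik : (i : ℝ) + 1 ≤ k := by exact_mod_cast hi
    have hcm : (m : ℝ) = c * k := by exact_mod_cast hmck
    have hcpos : (1:ℝ) ≤ c := by exact_mod_cast hc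
    have hi0 : (0:ℝ) ≤ i := Nat.cast_nonneg i
    have hxu : x + i = ((m:ℝ) + 1 + i) - a := by rw [hx_def]; ring
    have hva : ((c:ℝ) + 1) * (1 + i) - a = ((c:ℝ) + 1) * (y + i) := by
      rw [← hb, hy_def]; ring
    have hgv : (1 + (i:ℝ)) / (y + i) = (((c:ℝ) + 1) * (1 + i)) / (((c:ℝ) + 1) * (1 + i) - a) := by
      rw [hva, mul_div_mul_left _ _ hc1.ne']
    have hav : a < ((c:ℝ) + 1) * (1 + i) := by
      have hpr : (0:ℝ) ≤ ((c:ℝ) + 1) * i := mul_nonneg (by linarith) hi0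
      have hex : ((c:ℝ) + 1) * (1 + i) = ((c:ℝ) + 1) + ((c:ℝ) + 1) * i := by ring
      linarith
    have hle : ((c:ℝ) + 1) * (1 + i) ≤ (m:ℝ) + 1 + i := by
      have h1 : (c:ℝ) * ((i:ℝ) + 1) ≤ (c:ℝ) * k :=
        mul_le_mul_of_nonneg_left hik (by linarith)
      have h2 : ((c:ℝ) + 1) * (1 + i) = (c:ℝ) * ((i:ℝ) + 1) + 1 + i := by ring
      rw [hcm]; linarith
    constructor
    · rw [hxu, hgv]
      exact my_ratio_le a _ _ ha0 hav hle
    · intro hik'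
      have hik2 : (i : ℝ) + 1 < k := by exact_mod_cast hik'
      have hlt : ((c:ℝ) + 1) * (1 + i) < (m:ℝ) + 1 + i := by
        have h1 : (c:ℝ) * ((i:ℝ) + 1) < (c:ℝ) * k :=
          mul_lt_mul_of_pos_left hik2 (by linarith)
        have h2 : ((c:ℝ) + 1) * (1 + i) = (c:ℝ) * ((i:ℝ) + 1) + 1 + i := by ring
        rw [hcm]; linarith
      rw [hxu, hgv]
      exact my_ratio_lt a _ _ ha0 hav hlt
  apply Finset.prod_lt_prod
  · intro i hi
    have : (0:ℝ) ≤ i := Nat.cast_nonneg i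
    have hnum : 0 < (m : ℝ) + 1 + i := by have : (0:ℝ) ≤ m := Nat.cast_nonneg m; linarith
    have hden : 0 < x + i := by linarith
    exact div_pos hnum hden
  · intro i hi; exact (key i hi).1
  · refine ⟨0, Finset.mem_range.mpr (by omega), ?_⟩
    have := (key 0 (Finset.mem_range.mpr (by omega))).2 (by omega)
    simpa using this
end

section
/- Let α > 1 be real and let k ≥ 2 and c ≥ 1 be integers, and set n = (c+1)k. Then s·(n/(α−1))·( α − (Γ(n)/Γ(n−k))·Γ(n−k+1−1/α)/Γ(n+1−1/α) ) < s·k·(c+1)·α/(α − 1/(c+1)) for every s > 0. Equivalently, writing B for the Beta function, B(k, n−k+1−1/α)/B(k, n−k+1) > 1 + k/(αn − k). In words: the expected cost (with task cancellation) of launching a job of k tasks with i.i.d. Pareto(s, α) execution times together with kc MDS-coded tasks is strictly smaller than the expected cost of launching it with c replicas per task. -/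
open Real Finset

lemma gamma_ratio (x : ℝ) (hx : 0 < x) (k : ℕ) :
    Gamma (x + k) = (∏ j ∈ Finset.range k, (x + j)) * Gamma x := by
  induction k with
  | zero => simp
  | succ k ih =>
    have h1 : (x + (k + 1 : ℕ)) = (x + k) + 1 := by push_cast; ring
    have h2 : x + (k : ℝ) ≠ 0 := by positivity
    rw [h1, Real.Gamma_add_one h2, ih, Finset.prod_range_succ]
    ring

lemma telescope (a d : ℝ) (ha : 0 < a) (hd : 0 < d) (k : ℕ) :
    ∏ j ∈ Finset.range k, (a + j * d) / (a + (j + 1) * d) = a / (a + k * d) := by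
  induction k with
  | zero => simp [div_self ha.ne']
  | succ k ih =>
    rw [Finset.prod_range_succ, ih]
    have h1 : a + (k : ℝ) * d ≠ 0 := by positivity
    have h2 : a + ((k : ℝ) + 1) * d ≠ 0 := by positivity
    push_cast
    rw [div_mul_div_comm, div_eq_div_iff (by positivity) (by positivity)]
    ring

lemma fac1 (m j β : ℝ) (hm : 0 < m) (hj : 0 ≤ j) (hβ0 : 0 < β) (hβ1 : β < 1) :
    (m + j * (1 - β)) / (m + (j + 1) * (1 - β)) ≤ (m + j) / (m + 1 - β + j) := by
  rw [div_le_div_iff₀ (by nlinarith) (by nlinarith)]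
  nlinarith [mul_nonneg hj (mul_nonneg hβ0.le (by linarith : (0:ℝ) ≤ 1 - β))]

lemma fac1s (m j β : ℝ) (hm : 0 < m) (hj : 0 < j) (hβ0 : 0 < β) (hβ1 : β < 1) :
    (m + j * (1 - β)) / (m + (j + 1) * (1 - β)) < (m + j) / (m + 1 - β + j) := by
  rw [div_lt_div_iff₀ (by nlinarith) (by nlinarith)]
  nlinarith [mul_pos hj (mul_pos hβ0 (by linarith : (0:ℝ) < 1 - β))]

lemma fac2 (m j k β : ℝ) (hm : 0 < m) (hj : 0 ≤ j) (hjk : j ≤ k - 1)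
    (hβ0 : 0 < β) (hβ1 : β < 1) :
    (m + 1 - β + j) / (m + 1 + j)
      ≤ ((m + k - k * β) + j * β) / ((m + k - k * β) + (j + 1) * β) := by
  have hk1 : (1:ℝ) ≤ k := by linarith
  have ha : 0 < m + k - k * β := by nlinarith
  rw [div_le_div_iff₀ (by linarith) (by nlinarith)]
  nlinarith [mul_nonneg (mul_nonneg hβ0.le (by linarith : (0:ℝ) ≤ 1 - β))
    (by linarith : (0:ℝ) ≤ k - 1 - j)]

lemma fac2s (m j k β : ℝ) (hm : 0 < m) (hj : 0 ≤ j) (hjk : j < k - 1)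
    (hβ0 : 0 < β) (hβ1 : β < 1) :
    (m + 1 - β + j) / (m + 1 + j)
      < ((m + k - k * β) + j * β) / ((m + k - k * β) + (j + 1) * β) := by
  have hk1 : (1:ℝ) ≤ k := by linarith
  have ha : 0 < m + k - k * β := by nlinarith
  rw [div_lt_div_iff₀ (by linarith) (by nlinarith)]
  nlinarith [mul_pos (mul_pos hβ0 (by linarith : (0:ℝ) < 1 - β))
    (by linarith : (0:ℝ) < k - 1 - j)]

lemma frac1 (p q g h : ℝ) (hg : g ≠ 0) (hh : h ≠ 0) (hq : q ≠ 0) :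
    p * g / g * h / (q * h) = p / q := by
  field_simp
lemma frac2 (a b gk g1 g2 : ℝ) (ha : a ≠ 0) (hb : b ≠ 0) (h1 : g1 ≠ 0)
    (h2 : g2 ≠ 0) (hk : gk ≠ 0) :
    gk * g1 / (a * g1) / (gk * g2 / (b * g2)) = b / a := by
  field_simp
lemma rhs_eq (α s c k' : ℝ) (hα : 1 < α) (hc : 1 ≤ c) (hk : 0 < k') :
    s * ((c + 1) * k' / (α - 1)) * (α - c / (c + 1 - 1/α))
      = s * k' * (c + 1) * α / (α - 1 / (c + 1)) := by
  have h0 : (0:ℝ) < α := by linarith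
  have hβ1 : 1/α < 1 := by rw [div_lt_one h0]; exact hα
  have h1 : c + 1 - 1/α ≠ 0 := by nlinarith
  have h2 : α - 1 ≠ 0 := by linarith
  have h4 : c + 1 ≠ 0 := by positivity
  have h5 : α ≠ 0 := h0.ne'
  set D : ℝ := c + 1 - 1/α with hD
  have e1 : α - c / D = (c + 1) * (α - 1) / D := by
    rw [eq_div_iff h1, sub_mul, div_mul_cancel₀ _ h1, hD]
    field_simp
    ring
  have e2 : α - 1/(c+1) = α * D / (c + 1) := by
    rw [hD]
    field_simp
  rw [e1, e2]
  have hD0 : D ≠ 0 := h1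
  field_simp
lemma beta_rhs (α nn kk : ℝ) (h1 : α * nn - kk ≠ 0) (h2 : nn - kk * (1/α) ≠ 0)
    (h5 : α ≠ 0) :
    1 + kk / (α * nn - kk) = nn / (nn - kk * (1/α)) := by
  rw [add_div' _ _ _ h1, div_eq_div_iff h1 h2]
  field_simp
  ring

/-- The Beta function `B(x, y) = Γ(x)Γ(y)/Γ(x+y)`. -/
noncomputable def Beta (x y : ℝ) : ℝ := Gamma x * Gamma y / Gamma (x + y)

/-- Executing a job of `k` tasks with `k*c` MDS-coded redundant tasks achieves strictly
smaller expected cost (with task cancellation) than executing it with `c` replicas per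
task, when task execution times are i.i.d. `Pareto(s, α)`.  Equivalently,
`B(k, n−k+1−1/α)/B(k, n−k+1) > 1 + k/(αn − k)` for `n = (c+1)k`. -/
theorem stmt9 (α : ℝ) (hα : 1 < α) (k c : ℕ) (hk : 2 ≤ k) (hc : 1 ≤ c)
    (n : ℕ) (hn : n = (c + 1) * k) :
    (∀ s : ℝ, 0 < s →
      s * ((n : ℝ) / (α - 1)) *
          (α - (Gamma (n : ℝ) / Gamma ((n : ℝ) - k)) *
            Gamma ((n : ℝ) - k + 1 - 1 / α) / Gamma ((n : ℝ) + 1 - 1 / α))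
        < s * k * (c + 1) * α / (α - 1 / (c + 1))) ∧
    Beta (k : ℝ) ((n : ℝ) - k + 1 - 1 / α) / Beta (k : ℝ) ((n : ℝ) - k + 1)
      > 1 + (k : ℝ) / (α * n - k) := by
  have hα0 : (0:ℝ) < α := by linarith
  have hβ0 : 0 < 1/α := by positivity
  have hβ1 : 1/α < 1 := by rw [div_lt_one hα0]; exact hα
  have hd : (0:ℝ) < 1 - 1/α := by linarith
  set m : ℕ := c * k with hmdef
  have hkr : (2:ℝ) ≤ (k:ℝ) := by exact_mod_cast hk
  have hcr : (1:ℝ) ≤ (c:ℝ) := by exact_mod_cast hc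
  have hmr : (m:ℝ) = (c:ℝ) * k := by push_cast [hmdef]; ring
  have hnr : (n:ℝ) = (m:ℝ) + k := by rw [hn]; push_cast [hmdef]; ring
  have hm0' : 0 < m := Nat.mul_pos (by omega) (by omega)
  have hm0 : (0:ℝ) < (m:ℝ) := by exact_mod_cast hm0'
  have hk0 : (0:ℝ) < (k:ℝ) := by linarith
  set P1 : ℝ := ∏ j ∈ Finset.range k, ((m:ℝ) + j) with hP1
  set P2 : ℝ := ∏ j ∈ Finset.range k, ((m:ℝ) + 1 + j) with hP2
  set Q : ℝ := ∏ j ∈ Finset.range k, ((m:ℝ) + 1 - 1/α + j) with hQ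
  have hP1pos : 0 < P1 := Finset.prod_pos fun j _ => by positivity
  have hP2pos : 0 < P2 := Finset.prod_pos fun j _ => by positivity
  have hQpos : 0 < Q := Finset.prod_pos fun j _ => by
    have hj0 : (0:ℝ) ≤ (j:ℝ) := Nat.cast_nonneg j
    linarith
  have hGm : 0 < Gamma (m:ℝ) := Real.Gamma_pos_of_pos hm0
  have hGmb : 0 < Gamma ((m:ℝ) + 1 - 1/α) := Real.Gamma_pos_of_pos (by linarith)
  have hGm1 : 0 < Gamma ((m:ℝ) + 1) := Real.Gamma_pos_of_pos (by linarith)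
  have hGk : 0 < Gamma (k:ℝ) := Real.Gamma_pos_of_pos hk0
  have hG1 : Gamma (n:ℝ) = P1 * Gamma (m:ℝ) := by
    rw [hnr]; exact gamma_ratio _ hm0 k
  have hG2 : Gamma ((n:ℝ) + 1 - 1/α) = Q * Gamma ((m:ℝ) + 1 - 1/α) := by
    have h : (n:ℝ) + 1 - 1/α = ((m:ℝ) + 1 - 1/α) + k := by rw [hnr]; ring
    rw [h, gamma_ratio _ (by linarith) k]
  have hmk : (n:ℝ) - k = (m:ℝ) := by rw [hnr]; ring
  -- key inequality 1 : c/(c+1-1/α) < P1/Q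
  have key1 : (c:ℝ) / ((c:ℝ) + 1 - 1/α) < P1 / Q := by
    have htel := telescope (m:ℝ) (1 - 1/α) hm0 hd k
    have hLHS : (c:ℝ) / ((c:ℝ) + 1 - 1/α)
        = ∏ j ∈ Finset.range k, ((m:ℝ) + j * (1 - 1/α)) / ((m:ℝ) + (j + 1) * (1 - 1/α)) := by
      rw [htel]
      have hq2 : (0:ℝ) < (m:ℝ) + (k:ℝ) * (1 - 1/α) := by
        have := mul_pos hk0 hd; linarith
      rw [div_eq_div_iff (by linarith : (0:ℝ) < (c:ℝ)+1-1/α).ne' hq2.ne', hmr]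
      ring
    rw [hLHS, hP1, hQ, ← Finset.prod_div_distrib]
    apply Finset.prod_lt_prod
    · intro j _
      have hj0 : (0:ℝ) ≤ (j:ℝ) := Nat.cast_nonneg j
      have h1 := mul_nonneg hj0 hd.le
      have h2 := mul_nonneg (by linarith : (0:ℝ) ≤ (j:ℝ) + 1) hd.le
      exact div_pos (by linarith) (by linarith)
    · intro j _
      exact fac1 (m:ℝ) (j:ℝ) (1/α) hm0 (Nat.cast_nonneg j) hβ0 hβ1
    · refine ⟨1, Finset.mem_range.mpr (by omega), ?_⟩
      push_cast
      exact fac1s (m:ℝ) 1 (1/α) hm0 one_pos hβ0 hβ1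
  -- key inequality 2 : Q/P2 < (n - k/α)/n
  have hnkb : (0:ℝ) < (n:ℝ) - (k:ℝ) * (1/α) := by
    have h := mul_pos hk0 hd
    rw [hnr]; nlinarith
  have hn0 : (0:ℝ) < (n:ℝ) := by rw [hnr]; linarith
  have key2 : Q / P2 < ((n:ℝ) - (k:ℝ) * (1/α)) / n := by
    have htel := telescope ((n:ℝ) - (k:ℝ) * (1/α)) (1/α) hnkb hβ0 k
    have hRHS : ((n:ℝ) - (k:ℝ) * (1/α)) / n
        = ∏ j ∈ Finset.range k,
            (((n:ℝ) - (k:ℝ) * (1/α)) + j * (1/α)) / (((n:ℝ) - (k:ℝ) * (1/α)) + (j + 1) * (1/α)) := by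
      rw [htel]
      congr 1
      ring
    rw [hRHS, hQ, hP2, ← Finset.prod_div_distrib]
    apply Finset.prod_lt_prod
    · intro j _
      have hj0 : (0:ℝ) ≤ (j:ℝ) := Nat.cast_nonneg j
      exact div_pos (by linarith) (by linarith)
    · intro j hj
      have hjk : (j:ℝ) ≤ (k:ℝ) - 1 := by
        have h := Finset.mem_range.mp hj
        have : (j:ℝ) + 1 ≤ (k:ℝ) := by exact_mod_cast h
        linarith
      have h := fac2 (m:ℝ) (j:ℝ) (k:ℝ) (1/α) hm0 (Nat.cast_nonneg j) hjk hβ0 hβ1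
      rw [hnr]
      exact h
    · refine ⟨0, Finset.mem_range.mpr (by omega), ?_⟩
      have h := fac2s (m:ℝ) 0 (k:ℝ) (1/α) hm0 le_rfl (by linarith) hβ0 hβ1
      rw [hnr]
      push_cast
      exact h
  constructor
  · intro s hs
    have hR : Gamma (n:ℝ) / Gamma ((n:ℝ) - k) * Gamma ((n:ℝ) - k + 1 - 1/α)
        / Gamma ((n:ℝ) + 1 - 1/α) = P1 / Q := by
      have h1 : (n:ℝ) - k + 1 - 1/α = (m:ℝ) + 1 - 1/α := by rw [hnr]; ring
      rw [h1, hmk, hG1, hG2]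
      exact frac1 P1 Q (Gamma (m:ℝ)) (Gamma ((m:ℝ) + 1 - 1/α)) hGm.ne' hGmb.ne' hQpos.ne'
    rw [hR]
    have hstep : s * ((n:ℝ)/(α-1)) * (α - P1/Q)
        < s * ((n:ℝ)/(α-1)) * (α - (c:ℝ)/((c:ℝ)+1-1/α)) := by
      have hpos : 0 < s * ((n:ℝ)/(α-1)) :=
        mul_pos hs (div_pos hn0 (by linarith))
      exact mul_lt_mul_of_pos_left (by linarith) hpos
    refine hstep.trans_le (le_of_eq ?_)
    have h1 : (c:ℝ) + 1 - 1/α ≠ 0 := (by linarith : (0:ℝ) < (c:ℝ)+1-1/α).ne'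
    have h2 : α - 1 ≠ 0 := by linarith
    rw [hn]
    push_cast
    exact rhs_eq α s (c:ℝ) (k:ℝ) hα hcr hk0
  · -- Beta part
    have hB1 : Beta (k:ℝ) ((n:ℝ) - k + 1 - 1/α)
        = Gamma (k:ℝ) * Gamma ((m:ℝ) + 1 - 1/α) / (Q * Gamma ((m:ℝ) + 1 - 1/α)) := by
      have h1 : (n:ℝ) - k + 1 - 1/α = (m:ℝ) + 1 - 1/α := by rw [hnr]; ring
      have h2 : (k:ℝ) + ((m:ℝ) + 1 - 1/α) = ((m:ℝ) + 1 - 1/α) + k := by ring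
      simp only [Beta]
      rw [h1, h2, gamma_ratio ((m:ℝ) + 1 - 1/α) (by linarith) k]
    have hB2 : Beta (k:ℝ) ((n:ℝ) - k + 1)
        = Gamma (k:ℝ) * Gamma ((m:ℝ) + 1) / (P2 * Gamma ((m:ℝ) + 1)) := by
      have h1 : (n:ℝ) - k + 1 = (m:ℝ) + 1 := by rw [hnr]; ring
      have h2 : (k:ℝ) + ((m:ℝ) + 1) = ((m:ℝ) + 1) + k := by ring
      simp only [Beta]
      rw [h1, h2, gamma_ratio ((m:ℝ) + 1) (by linarith) k]
    have hratio : Beta (k:ℝ) ((n:ℝ) - k + 1 - 1/α) / Beta (k:ℝ) ((n:ℝ) - k + 1)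
        = P2 / Q := by
      rw [hB1, hB2]
      exact frac2 Q P2 (Gamma (k:ℝ)) (Gamma ((m:ℝ) + 1 - 1/α)) (Gamma ((m:ℝ) + 1))
        hQpos.ne' hP2pos.ne' hGmb.ne' hGm1.ne' hGk.ne'
    rw [hratio, gt_iff_lt]
    have hRHS : 1 + (k:ℝ) / (α * n - k) = (n:ℝ) / ((n:ℝ) - (k:ℝ) * (1/α)) := by
      have h1 : α * (n:ℝ) - k ≠ 0 := by
        have h2 := mul_lt_mul_of_pos_right hα hn0
        have h3 : (0:ℝ) < α * n - k := by linarith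
        exact h3.ne'
      exact beta_rhs α (n:ℝ) (k:ℝ) h1 hnkb.ne' hα0.ne'
    rw [hRHS]
    rw [div_lt_div_iff₀ hnkb hQpos]
    have h := (div_lt_div_iff₀ hP2pos hn0).mp key2
    linarith
end

section
/- Fix s > 0, an integer k ≥ 1, and a real α > 1. For an integer c ≥ 0 let E[C_c] = s·k·(c+1)·α/(α − 1/(c+1)) denote the expected cost of zero-delay replication with c replicas per task under i.i.d. Pareto(s, α) execution times. Then for every integer c ≥ 1: E[C_c] < E[C_0] if and only if c < 1/(α−1) − 1. Consequently, there exists an integer c ≥ 1 with E[C_c] < E[C_0] if and only if α < 1.5, and the largest c with E[C_c] ≤ E[C_0] (when α < 1.5) is c_max = ⌊1/(α−1)⌋ − 1. -/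
open Real

private lemma aux_lt (α m : ℝ) (hα : 1 < α) (hm : 2 ≤ m) :
    m * (α - 1) < α - 1 / m ↔ m * (α - 1) < 1 := by
  have hm0 : (0 : ℝ) < m := by linarith
  have hu : (1 / m) * m = 1 := by field_simp
  constructor
  · intro h
    nlinarith [mul_lt_mul_of_pos_right h hm0, hu]
  · intro h
    nlinarith [hu, mul_pos (show (0:ℝ) < m - 1 by linarith)
      (show (0:ℝ) < 1 - m * (α - 1) by linarith)]

private lemma aux_le (α m : ℝ) (hα : 1 < α) (hm : 2 ≤ m) :
    m * (α - 1) ≤ α - 1 / m ↔ m * (α - 1) ≤ 1 := by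
  have hm0 : (0 : ℝ) < m := by linarith
  have hu : (1 / m) * m = 1 := by field_simp
  constructor
  · intro h
    nlinarith [mul_le_mul_of_nonneg_right h (le_of_lt hm0), hu]
  · intro h
    nlinarith [hu, mul_nonneg (show (0:ℝ) ≤ m - 1 by linarith)
      (show (0:ℝ) ≤ 1 - m * (α - 1) by linarith)]

/-- Zero-delay replication with `c` replicas per task under i.i.d. `Pareto(s, α)` task
execution times reduces the expected cost below the no-redundancy baseline iff
`c < 1/(α−1) − 1`; such a `c ≥ 1` exists iff `α < 1.5`, and when `α < 1.5` the largest
cost-non-increasing `c` is `⌊1/(α−1)⌋ − 1`. -/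
theorem stmt10 (s : ℝ) (hs : 0 < s) (k : ℕ) (hk : 1 ≤ k) (α : ℝ) (hα : 1 < α)
    (EC : ℕ → ℝ) (hEC : ∀ c : ℕ, EC c = s * k * (c + 1) * α / (α - 1 / (c + 1))) :
    (∀ c : ℕ, 1 ≤ c → (EC c < EC 0 ↔ (c : ℝ) < 1 / (α - 1) - 1)) ∧
    ((∃ c : ℕ, 1 ≤ c ∧ EC c < EC 0) ↔ α < 1.5) ∧
    (α < 1.5 → IsGreatest {c : ℕ | EC c ≤ EC 0} (⌊1 / (α - 1)⌋₊ - 1)) := by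
  have hk1 : (1 : ℝ) ≤ (k : ℝ) := by exact_mod_cast hk
  have h1 : (0 : ℝ) < α - 1 := by linarith
  have hP : (0 : ℝ) < s * k * α :=
    mul_pos (mul_pos hs (by linarith)) (by linarith)
  have hEC0 : EC 0 = s * k * α / (α - 1) := by rw [hEC]; norm_num
  have hm : ∀ c : ℕ, (0 : ℝ) < (c : ℝ) + 1 := fun c => by positivity
  have hd : ∀ c : ℕ, (0 : ℝ) < α - 1 / ((c : ℝ) + 1) := by
    intro c
    have : 1 / ((c : ℝ) + 1) ≤ 1 := by
      rw [div_le_one (hm c)]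
      have : (0:ℝ) ≤ (c:ℝ) := Nat.cast_nonneg c
      linarith
    linarith
  have keylt : ∀ c : ℕ,
      (EC c < EC 0 ↔ ((c : ℝ) + 1) * (α - 1) < α - 1 / ((c : ℝ) + 1)) := by
    intro c
    rw [hEC c, hEC0, div_lt_div_iff₀ (hd c) h1,
      show s * (k:ℝ) * ((c:ℝ) + 1) * α * (α - 1)
        = (s * k * α) * (((c:ℝ) + 1) * (α - 1)) from by ring,
      show s * (k:ℝ) * α * (α - 1 / ((c:ℝ) + 1))
        = (s * k * α) * (α - 1 / ((c:ℝ) + 1)) from by ring]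
    exact mul_lt_mul_iff_right₀ hP
  have keyle : ∀ c : ℕ,
      (EC c ≤ EC 0 ↔ ((c : ℝ) + 1) * (α - 1) ≤ α - 1 / ((c : ℝ) + 1)) := by
    intro c
    rw [hEC c, hEC0, div_le_div_iff₀ (hd c) h1,
      show s * (k:ℝ) * ((c:ℝ) + 1) * α * (α - 1)
        = (s * k * α) * (((c:ℝ) + 1) * (α - 1)) from by ring,
      show s * (k:ℝ) * α * (α - 1 / ((c:ℝ) + 1))
        = (s * k * α) * (α - 1 / ((c:ℝ) + 1)) from by ring]
    exact mul_le_mul_iff_right₀ hP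
  have part1 : ∀ c : ℕ, 1 ≤ c → (EC c < EC 0 ↔ (c : ℝ) < 1 / (α - 1) - 1) := by
    intro c hc
    have hc1 : (1 : ℝ) ≤ (c : ℝ) := by exact_mod_cast hc
    have hm2 : (2 : ℝ) ≤ (c : ℝ) + 1 := by linarith
    have hiff : ((c : ℝ) + 1) * (α - 1) < 1 ↔ (c : ℝ) < 1 / (α - 1) - 1 := by
      rw [← lt_div_iff₀ h1]
      constructor <;> intro <;> linarith
    exact (keylt c).trans ((aux_lt α ((c:ℝ)+1) hα hm2).trans hiff)
  refine ⟨part1, ⟨?_, ?_⟩, ?_⟩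
  · rintro ⟨c, hc, hlt⟩
    have h := (part1 c hc).1 hlt
    have hc1 : (1 : ℝ) ≤ (c : ℝ) := by exact_mod_cast hc
    have h2 : (2 : ℝ) < 1 / (α - 1) := by linarith
    have := (lt_div_iff₀ h1).1 h2
    nlinarith
  · intro h15
    refine ⟨1, le_refl 1, (part1 1 (le_refl 1)).2 ?_⟩
    have h2 : (2 : ℝ) < 1 / (α - 1) := by
      rw [lt_div_iff₀ h1]; nlinarith
    push_cast
    linarith
  · intro h15
    have h2 : (2 : ℝ) ≤ 1 / (α - 1) := by
      rw [le_div_iff₀ h1]; nlinarith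
    have hfl2 : 2 ≤ ⌊1 / (α - 1)⌋₊ := Nat.le_floor h2
    set N := ⌊1 / (α - 1)⌋₊ with hN
    constructor
    · show EC (N - 1) ≤ EC 0
      have hcast : ((N - 1 : ℕ) : ℝ) + 1 = (N : ℝ) := by
        have : 1 ≤ N := by omega
        push_cast [Nat.cast_sub this]
        ring
      rw [keyle (N - 1), hcast]
      have hm2 : (2 : ℝ) ≤ (N : ℝ) := by exact_mod_cast hfl2
      rw [aux_le α (N : ℝ) hα hm2]
      have hfl : (N : ℝ) ≤ 1 / (α - 1) := Nat.floor_le (by positivity)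
      have := (le_div_iff₀ h1).1 hfl
      linarith
    · intro c hc
      rcases Nat.eq_zero_or_pos c with h0 | hpos
      · omega
      · have hc1 : (1 : ℝ) ≤ (c : ℝ) := by exact_mod_cast hpos
        have hm2 : (2 : ℝ) ≤ (c : ℝ) + 1 := by linarith
        have h := ((keyle c).trans (aux_le α ((c:ℝ)+1) hα hm2)).1 hc
        have hle : ((c : ℝ) + 1) ≤ 1 / (α - 1) := by
          rw [le_div_iff₀ h1]; linarith
        have : c + 1 ≤ N := Nat.le_floor (by push_cast; linarith)
        omega
end

section
/- Fix s > 0, integers n > k ≥ 1, and a real α > 1. Let E[C_n] = s·(n/(α−1))·( α − (Γ(n)/Γ(n−k))·Γ(n−k+1−1/α)/Γ(n+1−1/α) ) denote the expected cost of zero-delay coding with n−k coded tasks under i.i.d. Pareto(s, α) execution times, and let E[C_k] = s·k·α/(α−1) denote the baseline cost with no redundancy. If α^α ≤ n/(n−k+1), then E[C_n] < E[C_k]. -/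
open Real


private lemma gammaProd (c : ℝ) (hc : 0 < c) (k : ℕ) :
    Gamma (c + k) = Gamma c * ∏ i ∈ Finset.range k, (c + i) := by
  induction k with
  | zero => simp
  | succ k ih =>
    have h2 : (c + (k:ℝ)) ≠ 0 := by positivity
    have h1 : (c + ((k+1:ℕ)):ℝ) = (c + (k:ℝ)) + 1 := by push_cast; ring
    rw [h1, Real.Gamma_add_one h2, ih, Finset.prod_range_succ]
    ring

private lemma prodShift (c : ℝ) (hc : c ≠ 0) (k : ℕ) :
    ∏ i ∈ Finset.range k, (c + 1 + i) = (∏ i ∈ Finset.range k, (c + i)) * (c + k) / c := by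
  have h := Finset.prod_range_succ' (fun i => c + (i:ℝ)) k
  rw [Finset.prod_range_succ] at h
  have h2 : ∏ i ∈ Finset.range k, (c + ((i+1:ℕ):ℝ)) = ∏ i ∈ Finset.range k, (c + 1 + i) := by
    apply Finset.prod_congr rfl; intro i _; push_cast; ring
  rw [h2] at h
  rw [eq_div_iff hc]
  simpa using h.symm


/-- Sufficient condition for zero-delay coding to reduce the expected cost below the
no-redundancy baseline under i.i.d. `Pareto(s, α)` task execution times: if
`α^α ≤ n/(n−k+1)` then `E[C_n] < E[C_k]`. -/
theorem stmt11 (s : ℝ) (hs : 0 < s) (n k : ℕ) (hk : 1 ≤ k) (hkn : k < n)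
    (α : ℝ) (hα : 1 < α)
    (hcond : α ^ α ≤ (n : ℝ) / ((n : ℝ) - k + 1)) :
    s * ((n : ℝ) / (α - 1)) *
        (α - (Gamma (n : ℝ) / Gamma ((n : ℝ) - k)) *
          Gamma ((n : ℝ) - k + 1 - 1 / α) / Gamma ((n : ℝ) + 1 - 1 / α))
      < s * k * α / (α - 1) := by
  have hα0 : (0:ℝ) < α := lt_trans one_pos hα
  set β : ℝ := 1/α with hβdef
  have hβ0 : 0 < β := by positivity
  have hβ1 : β < 1 := by rw [hβdef, div_lt_one hα0]; exact hα
  have hαβ : α * β = 1 := by rw [hβdef]; field_simp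
  obtain ⟨m, rfl⟩ : ∃ m, n = m + k := ⟨n - k, by omega⟩
  have hm1 : 1 ≤ m := by omega
  have hmpos : (0:ℝ) < m := by exact_mod_cast hm1
  have hcast : ((m + k : ℕ) : ℝ) - k = (m:ℝ) := by push_cast; ring
  rw [hcast]
  -- abbreviations
  set P : ℝ := ∏ i ∈ Finset.range k, ((m:ℝ) + i) with hPdef
  set Q : ℝ := ∏ i ∈ Finset.range k, (((m:ℝ) + 1 - β) + i) with hQdef
  set T : ℝ := ∏ i ∈ Finset.range k, (1 - β/((m:ℝ)+1+i)) with hTdef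
  set S : ℝ := ∑ i ∈ Finset.range k, 1/((m:ℝ)+1+i) with hSdef
  have hPpos : 0 < P := Finset.prod_pos (fun i _ => by positivity)
  have hc2 : (0:ℝ) < (m:ℝ) + 1 - β := by linarith
  have hQpos : 0 < Q := Finset.prod_pos (fun i _ => by positivity)
  have hfac_pos : ∀ i : ℕ, 0 < 1 - β/((m:ℝ)+1+i) := by
    intro i
    have h1 : β/((m:ℝ)+1+i) < 1 := by
      rw [div_lt_one (by positivity)]
      have : (0:ℝ) ≤ (i:ℝ) := Nat.cast_nonneg i
      linarith
    linarith
  have hTpos : 0 < T := Finset.prod_pos (fun i _ => hfac_pos i)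
  -- Gamma rewrites
  have hΓn : Gamma ((m + k : ℕ):ℝ) = Gamma (m:ℝ) * P := by
    have h : (((m+k:ℕ)):ℝ) = (m:ℝ) + k := by push_cast; ring
    rw [h, gammaProd _ hmpos]
  have hΓn2 : Gamma (((m + k : ℕ):ℝ) + 1 - 1/α) = Gamma ((m:ℝ)+1-β) * Q := by
    have h : (((m+k:ℕ)):ℝ) + 1 - 1/α = ((m:ℝ) + 1 - β) + k := by
      rw [hβdef]; push_cast; ring
    rw [h, gammaProd _ hc2]
  have harg : (m:ℝ) + 1 - 1/α = (m:ℝ) + 1 - β := by rw [hβdef]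
  rw [harg, hΓn, hΓn2]
  have hΓm_pos : 0 < Gamma (m:ℝ) := Real.Gamma_pos_of_pos hmpos
  have hΓ2_pos : 0 < Gamma ((m:ℝ)+1-β) := Real.Gamma_pos_of_pos hc2
  have hRval : Gamma (m:ℝ) * P / Gamma (m:ℝ) * Gamma ((m:ℝ)+1-β) / (Gamma ((m:ℝ)+1-β) * Q)
      = P / Q := by
    field_simp
  rw [hRval]
  -- factorization Q = P * (m+k)/m * T
  have hQfact : Q = P * ((m:ℝ)+k) / (m:ℝ) * T := by
    have h1 : Q = ∏ i ∈ Finset.range k, (((m:ℝ)+1+i) * (1 - β/((m:ℝ)+1+i))) := by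
      apply Finset.prod_congr rfl; intro i _
      have hne : ((m:ℝ)+1+i) ≠ 0 := by positivity
      field_simp
      ring
    have h2 : ∏ i ∈ Finset.range k, ((m:ℝ)+1+(i:ℝ)) = P * ((m:ℝ)+k) / (m:ℝ) :=
      prodShift (m:ℝ) (ne_of_gt hmpos) k
    rw [h1, Finset.prod_mul_distrib, h2]
  -- analytic bound : T < β
  have hTexp : T ≤ Real.exp (-(β * S)) := by
    have h1 : T ≤ ∏ i ∈ Finset.range k, Real.exp (-(β/((m:ℝ)+1+i))) := by
      apply Finset.prod_le_prod
      · intro i _; exact le_of_lt (hfac_pos i)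
      · intro i _
        have h := Real.add_one_le_exp (-(β/((m:ℝ)+1+i)))
        linarith
    have h2 : ∏ i ∈ Finset.range k, Real.exp (-(β/((m:ℝ)+1+i)))
        = Real.exp (∑ i ∈ Finset.range k, -(β/((m:ℝ)+1+i))) := (Real.exp_sum _ _).symm
    have h3 : ∑ i ∈ Finset.range k, -(β/((m:ℝ)+1+i)) = -(β * S) := by
      rw [hSdef, Finset.mul_sum, ← Finset.sum_neg_distrib]
      apply Finset.sum_congr rfl; intro i _
      rw [mul_one_div]
    rw [h2, h3] at h1
    exact h1
  have htel : Real.log ((m:ℝ)+1+k) - Real.log ((m:ℝ)+1) ≤ S := by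
    have htel0 := Finset.sum_range_sub (fun i => Real.log ((m:ℝ)+1+i)) k
    have h0 : Real.log ((m:ℝ)+1+(0:ℕ)) = Real.log ((m:ℝ)+1) := by norm_num
    rw [h0] at htel0
    rw [← htel0]
    apply Finset.sum_le_sum
    intro i _
    have hx : (0:ℝ) < (m:ℝ)+1+i := by positivity
    have hx1 : (0:ℝ) < ((m:ℝ)+1+((i+1:ℕ):ℝ))/((m:ℝ)+1+i) := by positivity
    have hlog := Real.log_le_sub_one_of_pos hx1
    rw [Real.log_div (by positivity) (ne_of_gt hx)] at hlog
    have heq : ((m:ℝ)+1+((i+1:ℕ):ℝ))/((m:ℝ)+1+i) - 1 = 1/((m:ℝ)+1+i) := by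
      push_cast
      field_simp
      ring
    rw [heq] at hlog
    simpa using hlog
  have hcond' : α * Real.log α ≤ Real.log ((m:ℝ)+k) - Real.log ((m:ℝ)+1) := by
    have hcc : α ^ α ≤ ((m:ℝ)+k) / ((m:ℝ)+1) := by
      have : ((m+k:ℕ):ℝ) - k + 1 = (m:ℝ) + 1 := by push_cast; ring
      rw [this] at hcond
      rw [show ((m+k:ℕ):ℝ) = (m:ℝ)+k by push_cast; ring] at hcond
      exact hcond
    have h1 : Real.log (α ^ α) = α * Real.log α := Real.log_rpow hα0 α
    have hpow : (0:ℝ) < α ^ α := Real.rpow_pos_of_pos hα0 α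
    have h2 := Real.log_le_log hpow hcc
    rw [h1, Real.log_div (by positivity) (by positivity)] at h2
    exact h2
  have hklt : Real.log ((m:ℝ)+k) < Real.log ((m:ℝ)+1+k) := by
    apply Real.log_lt_log (by positivity)
    linarith
  have hS_gt : α * Real.log α < S := by linarith
  have hβS : Real.log α < β * S := by
    have h := (mul_lt_mul_iff_right₀ hβ0).mpr hS_gt
    calc Real.log α = β * (α * Real.log α) := by
          rw [← mul_assoc, mul_comm β α, hαβ, one_mul]
      _ < β * S := h
  have hTβ : T < β := by
    have h1 : Real.exp (-(β*S)) < Real.exp (-(Real.log α)) := by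
      apply Real.exp_lt_exp.mpr; linarith
    have h2 : Real.exp (-(Real.log α)) = β := by
      rw [Real.exp_neg, Real.exp_log hα0, hβdef, one_div]
    linarith
  -- final assembly
  have hkey : ((m+k:ℕ):ℝ) * (α - P/Q) < k * α := by
    have hPQ : P/Q = (m:ℝ) / (((m:ℝ)+k) * T) := by
      rw [hQfact]
      field_simp
    rw [hPQ]
    have hmk : (0:ℝ) < (m:ℝ)+k := by positivity
    have hαT : α * T < 1 := by
      calc α * T < α * β := (mul_lt_mul_iff_right₀ hα0).mpr hTβ
        _ = 1 := hαβ
    have hm_div : (m:ℝ) * α < (m:ℝ) / T := by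
      rw [lt_div_iff₀ hTpos]
      calc (m:ℝ) * α * T = (m:ℝ) * (α * T) := by ring
        _ < (m:ℝ) * 1 := (mul_lt_mul_iff_right₀ hmpos).mpr hαT
        _ = (m:ℝ) := mul_one _
    have hexpand : ((m+k:ℕ):ℝ) * (α - (m:ℝ) / (((m:ℝ)+k) * T)) = ((m:ℝ)+k)*α - (m:ℝ)/T := by
      push_cast
      field_simp
    rw [hexpand]
    push_cast
    linarith
  have hd : (0:ℝ) < α - 1 := by linarith
  have hsd : (0:ℝ) < s / (α - 1) := div_pos hs hd
  have := mul_lt_mul_of_pos_left hkey hsd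
  calc s * (((m+k:ℕ):ℝ) / (α - 1)) * (α - P/Q)
      = s/(α-1) * (((m+k:ℕ):ℝ) * (α - P/Q)) := by ring
    _ < s/(α-1) * ((k:ℝ) * α) := this
    _ = s * k * α / (α-1) := by ring
end

section
/- Fix s > 0, integers n > k ≥ 1, and a real α > 1. Let E[C_n] = s·(n/(α−1))·( α − (Γ(n)/Γ(n−k))·Γ(n−k+1−1/α)/Γ(n+1−1/α) ) and E[C_k] = s·k·α/(α−1). If E[C_n] ≤ E[C_k], then α^α < (n+1)/(n−k). -/
open Real

lemma key_ratio (x c : ℝ) (hx : 0 < x) (hc0 : 0 < c) (hc1 : c < 1) :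
    x / (x + c) ≤ (x / (x + 1)) ^ c := by
  have hx1 : 0 < x + 1 := by linarith
  have hxc : 0 < x + c := by linarith
  have h1 : ((x + 1) / x) ^ c * (1:ℝ) ^ (1 - c) ≤ c * ((x + 1) / x) + (1 - c) * 1 :=
    Real.geom_mean_le_arith_mean2_weighted hc0.le (by linarith) (by positivity)
      zero_le_one (by ring)
  have h2 : ((x + 1) / x) ^ c ≤ (x + c) / x := by
    rw [Real.one_rpow, mul_one] at h1
    calc ((x + 1) / x) ^ c ≤ c * ((x + 1) / x) + (1 - c) * 1 := h1
      _ = (x + c) / x := by field_simp; ring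
  have hpos : 0 < ((x + 1) / x) ^ c := Real.rpow_pos_of_pos (by positivity) c
  have h3 : x / (x + c) ≤ (((x + 1) / x) ^ c)⁻¹ := by
    rw [le_inv_comm₀ (by positivity) hpos]
    calc ((x + 1) / x) ^ c ≤ (x + c) / x := h2
      _ = (x / (x + c))⁻¹ := by rw [inv_div]
  calc x / (x + c) ≤ (((x + 1) / x) ^ c)⁻¹ := h3
    _ = (x / (x + 1)) ^ c := by
        rw [← Real.inv_rpow (by positivity), inv_div]

lemma gamma_prod_bound (β : ℝ) (hβ0 : 0 < β) (hβ1 : β < 1) :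
    ∀ k n : ℕ, k < n →
      Gamma (n : ℝ) * Gamma ((n : ℝ) - k + 1 - β) ≤
        (((n : ℝ) - k) / n) ^ (1 - β) * (Gamma ((n : ℝ) - k) * Gamma ((n : ℝ) + 1 - β)) := by
  intro k
  induction k with
  | zero =>
      intro n hn
      have hn0 : (0:ℝ) < n := by exact_mod_cast hn
      simp only [Nat.cast_zero, sub_zero]
      rw [div_self hn0.ne', Real.one_rpow, one_mul]
  | succ k ih =>
      intro n hn
      have hkn : k < n := Nat.lt_of_succ_lt hn
      have hn0 : (0:ℝ) < n := by exact_mod_cast Nat.zero_lt_of_lt hn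
      set a : ℝ := (n : ℝ) - (k + 1 : ℕ) with ha
      have ha1 : (1:ℝ) ≤ a := by
        have : (k + 2 : ℕ) ≤ n := hn
        have : ((k:ℝ) + 2) ≤ n := by exact_mod_cast this
        simp only [ha]; push_cast; linarith
      have ha0 : (0:ℝ) < a := by linarith
      have hnk : (n : ℝ) - (k : ℕ) = a + 1 := by simp only [ha]; push_cast; ring
      have hGa : 0 < Gamma a := Real.Gamma_pos_of_pos ha0
      have haβ : (0:ℝ) < a + 1 - β := by linarith
      have hGaβ : 0 < Gamma (a + 1 - β) := Real.Gamma_pos_of_pos haβ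
      have hGn : 0 < Gamma (n : ℝ) := Real.Gamma_pos_of_pos hn0
      have hGN : 0 < Gamma ((n : ℝ) + 1 - β) := Real.Gamma_pos_of_pos (by linarith)
      have ihn := ih n hkn
      rw [hnk] at ihn
      have e1 : Gamma (a + 1) = a * Gamma a := Real.Gamma_add_one ha0.ne'
      have e2 : Gamma (a + 1 + 1 - β) = (a + 1 - β) * Gamma (a + 1 - β) := by
        have : a + 1 + 1 - β = (a + 1 - β) + 1 := by ring
        rw [this, Real.Gamma_add_one haβ.ne']
      rw [e1, e2] at ihn
      -- ihn : Γn * ((a+1-β) * Γ(a+1-β)) ≤ ((a+1)/n)^(1-β) * (a * Γa * ΓN)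
      have step1 : Gamma (n : ℝ) * Gamma (a + 1 - β) ≤
          ((a + 1) / n) ^ (1 - β) * ((a / (a + 1 - β)) * (Gamma a * Gamma ((n:ℝ) + 1 - β))) := by
        rw [← sub_nonneg]
        have h := sub_nonneg.mpr ihn
        have key : ((a + 1) / n) ^ (1 - β) * (a / (a + 1 - β) * (Gamma a * Gamma ((n:ℝ) + 1 - β)))
            - Gamma (n : ℝ) * Gamma (a + 1 - β)
            = (((a + 1) / n) ^ (1 - β) * (a * Gamma a * Gamma ((n:ℝ) + 1 - β))
              - Gamma (n : ℝ) * ((a + 1 - β) * Gamma (a + 1 - β))) / (a + 1 - β) := by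
          field_simp
        rw [key]
        positivity
      have step2 : (a / (a + 1 - β)) ≤ (a / (a + 1)) ^ (1 - β) := by
        have h := key_ratio a (1 - β) ha0 (by linarith) (by linarith)
        have e : a + 1 - β = a + (1 - β) := by ring
        rw [e]; exact h
      have step3 : ((a + 1) / n) ^ (1 - β) * ((a / (a + 1 - β)) * (Gamma a * Gamma ((n:ℝ) + 1 - β)))
          ≤ ((a + 1) / n) ^ (1 - β) * ((a / (a + 1)) ^ (1 - β) * (Gamma a * Gamma ((n:ℝ) + 1 - β))) := by
        apply mul_le_mul_of_nonneg_left _ (by positivity)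
        exact mul_le_mul_of_nonneg_right step2 (by positivity)
      have step4 : ((a + 1) / n) ^ (1 - β) * ((a / (a + 1)) ^ (1 - β) * (Gamma a * Gamma ((n:ℝ) + 1 - β)))
          = (a / n) ^ (1 - β) * (Gamma a * Gamma ((n:ℝ) + 1 - β)) := by
        rw [← mul_assoc, ← Real.mul_rpow (by positivity) (by positivity)]
        congr 2
        field_simp
      calc Gamma (n : ℝ) * Gamma (a + 1 - β) ≤ _ := step1
        _ ≤ _ := step3
        _ = _ := step4

/-- Necessary condition for zero-delay coding not to exceed the no-redundancy baseline
cost under i.i.d. `Pareto(s, α)` task execution times: if `E[C_n] ≤ E[C_k]` then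
`α^α < (n+1)/(n−k)`. -/
theorem stmt12 (s : ℝ) (hs : 0 < s) (n k : ℕ) (hk : 1 ≤ k) (hkn : k < n)
    (α : ℝ) (hα : 1 < α)
    (hcost : s * ((n : ℝ) / (α - 1)) *
        (α - (Gamma (n : ℝ) / Gamma ((n : ℝ) - k)) *
          Gamma ((n : ℝ) - k + 1 - 1 / α) / Gamma ((n : ℝ) + 1 - 1 / α))
      ≤ s * k * α / (α - 1)) :
    α ^ α < ((n : ℝ) + 1) / ((n : ℝ) - k) := by
  have hα0 : (0:ℝ) < α := by linarith
  have hβ0 : (0:ℝ) < 1 / α := by positivity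
  have hβ1 : 1 / α < 1 := by rw [div_lt_one hα0]; exact hα
  have hα1 : (0:ℝ) < α - 1 := by linarith
  have hb0 : (0:ℝ) < (n : ℝ) := by exact_mod_cast Nat.zero_lt_of_lt hkn
  have hka : (k:ℝ) < (n:ℝ) := by exact_mod_cast hkn
  have ha0 : (0:ℝ) < (n:ℝ) - k := by linarith
  have hG1 : 0 < Gamma (n : ℝ) := Real.Gamma_pos_of_pos hb0
  have hG2 : 0 < Gamma ((n:ℝ) - k) := Real.Gamma_pos_of_pos ha0
  have hG3 : 0 < Gamma ((n:ℝ) - k + 1 - 1/α) := Real.Gamma_pos_of_pos (by linarith)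
  have hG4 : 0 < Gamma ((n:ℝ) + 1 - 1/α) := Real.Gamma_pos_of_pos (by linarith)
  set R : ℝ := Gamma (n : ℝ) / Gamma ((n:ℝ) - k) * Gamma ((n:ℝ) - k + 1 - 1/α)
      / Gamma ((n:ℝ) + 1 - 1/α) with hR
  -- Step A : (n-k) * α ≤ n * R
  have h1 := mul_le_mul_of_nonneg_right hcost hα1.le
  have h1' : s * ((n:ℝ) * (α - R)) ≤ s * ((k:ℝ) * α) := by
    have e1 : s * ((n : ℝ) / (α - 1)) * (α - R) * (α - 1) = s * ((n:ℝ) * (α - R)) := by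
      field_simp
    have e2 : s * k * α / (α - 1) * (α - 1) = s * ((k:ℝ) * α) := by
      field_simp
    rw [e1, e2] at h1
    exact h1
  have h2 : (n:ℝ) * (α - R) ≤ (k:ℝ) * α := (mul_le_mul_iff_right₀ hs).mp h1'
  have hA : ((n:ℝ) - k) * α ≤ (n:ℝ) * R := by nlinarith
  -- Step B : R ≤ ((n-k)/n) ^ (1 - 1/α)
  have hGB := gamma_prod_bound (1/α) hβ0 hβ1 k n hkn
  have hB : R ≤ (((n:ℝ) - k) / n) ^ (1 - 1/α) := by
    rw [hR, div_mul_eq_mul_div, div_div, div_le_iff₀ (by positivity)]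
    calc Gamma (n:ℝ) * Gamma ((n:ℝ) - k + 1 - 1/α)
        ≤ (((n:ℝ) - k) / n) ^ (1 - 1/α) * (Gamma ((n:ℝ) - k) * Gamma ((n:ℝ) + 1 - 1/α)) := hGB
      _ = (((n:ℝ) - k) / n) ^ (1 - 1/α) * (Gamma ((n:ℝ) - k) * Gamma ((n:ℝ) + 1 - 1/α)) := rfl
  -- Step C
  have hC : ((n:ℝ) - k) * α ≤ ((n:ℝ) - k) * ((n:ℝ) / ((n:ℝ) - k)) ^ (1/α) := by
    have e : (n:ℝ) * ((((n:ℝ) - k) / n) ^ (1 - 1/α))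
        = ((n:ℝ) - k) * ((n:ℝ) / ((n:ℝ) - k)) ^ (1/α) := by
      rw [show (1 - 1/α) = 1 + (-(1/α)) by ring,
        Real.rpow_add (by positivity), Real.rpow_one,
        Real.rpow_neg (by positivity), ← Real.inv_rpow (by positivity), inv_div]
      field_simp
    calc ((n:ℝ) - k) * α ≤ (n:ℝ) * R := hA
      _ ≤ (n:ℝ) * ((((n:ℝ) - k) / n) ^ (1 - 1/α)) :=
          mul_le_mul_of_nonneg_left hB hb0.le
      _ = ((n:ℝ) - k) * ((n:ℝ) / ((n:ℝ) - k)) ^ (1/α) := e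
  have hαle : α ≤ ((n:ℝ) / ((n:ℝ) - k)) ^ (1/α) := (mul_le_mul_iff_right₀ ha0).mp hC
  have hfin : α ^ α ≤ (n:ℝ) / ((n:ℝ) - k) := by
    have h5 : α ^ α ≤ (((n:ℝ) / ((n:ℝ) - k)) ^ (1/α)) ^ α :=
      Real.rpow_le_rpow hα0.le hαle hα0.le
    rwa [← Real.rpow_mul (by positivity),
      one_div_mul_cancel hα0.ne', Real.rpow_one] at h5
  calc α ^ α ≤ (n:ℝ) / ((n:ℝ) - k) := hfin
    _ < ((n:ℝ) + 1) / ((n:ℝ) - k) := by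
        rw [div_lt_div_iff₀ ha0 ha0]; nlinarith
end

section
/- Let α > 1 be real and n > k ≥ 1 be integers. Then ( n/(n−k+1) )^{1/α} < Γ(n+1)·Γ(n−k+1−1/α) / ( Γ(n+1−1/α)·Γ(n−k+1) ) < ( (n+1)/(n−k) )^{1/α}. Equivalently, the expected k-th smallest of n i.i.d. Pareto(s, α) random variables lies strictly between s·(n/(n−k+1))^{1/α} and s·((n+1)/(n−k))^{1/α}. -/
/-!
Strict log-convexity of `Γ` on `(0, ∞)`, applied to two points at distance one together with
`Γ(y + 1) = y Γ(y)`, gives Gautschi's inequality `x ^ l < Γ(x + 1) / Γ(x + 1 - l) < (x + 1) ^ l`.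
The quotient in the theorem is `A n / A (n - k)` with `A x = Γ(x + 1) / Γ(x + 1 - 1/α)`,
so the two bounds follow by combining Gautschi's inequality at `x = n` and `x = n - k`.
-/

open Real Set

namespace Real

theorem strictConvexOn_log_Gamma : StrictConvexOn ℝ (Ioi 0) (log ∘ Gamma) := by
  have shifted : ConvexOn ℝ (Ioi 0) (fun x => log (Gamma (1 + x))) :=
    (convexOn_log_Gamma.translate_right 1).subset
      (fun x (hx : 0 < x) => show 0 < 1 + x by linarith) (convex_Ioi 0)
  refine (shifted.add_strictConvexOn strictConcaveOn_log_Ioi.neg).congr fun x (hx : 0 < x) => ?_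
  -- `log Γ x = log Γ (1 + x) - log x`, and `-log` is strictly convex
  simp only [Pi.add_apply, Pi.neg_apply, Function.comp_apply]
  rw [add_comm 1 x, Gamma_add_one hx.ne', log_mul hx.ne' (Gamma_pos_of_pos hx).ne']
  ring

theorem Gamma_mul_add_mul_lt_rpow_Gamma_mul_rpow_Gamma {s t a b : ℝ} (hs : 0 < s) (ht : 0 < t)
    (hst : s ≠ t) (ha : 0 < a) (hb : 0 < b) (hab : a + b = 1) :
    Gamma (a * s + b * t) < Gamma s ^ a * Gamma t ^ b := by
  have hlog := strictConvexOn_log_Gamma.2 (mem_Ioi.2 hs) (mem_Ioi.2 ht) hst ha hb hab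
  simp only [Function.comp_apply, smul_eq_mul] at hlog
  rw [← log_rpow (Gamma_pos_of_pos hs), ← log_rpow (Gamma_pos_of_pos ht),
    ← log_mul (by positivity) (by positivity)] at hlog
  exact (log_lt_log_iff (Gamma_pos_of_pos (by positivity)) (by positivity)).1 hlog

theorem rpow_mul_Gamma_add_one_sub_lt_Gamma_add_one {x l : ℝ} (hx : 0 < x) (hl0 : 0 < l)
    (hl1 : l < 1) : x ^ l * Gamma (x + 1 - l) < Gamma (x + 1) := by
  have hconv := Gamma_mul_add_mul_lt_rpow_Gamma_mul_rpow_Gamma hx (by linarith : 0 < x + 1)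
    (by linarith) hl0 (by linarith : 0 < 1 - l) (by ring)
  have hGx := Gamma_pos_of_pos hx
  have hGx1 : Gamma x ^ l * Gamma (x + 1) ^ (1 - l) = x ^ (1 - l) * Gamma x := by
    rw [Gamma_add_one hx.ne', mul_rpow hx.le hGx.le, mul_left_comm,
      ← rpow_add hGx, add_sub_cancel, rpow_one]
  rw [show l * x + (1 - l) * (x + 1) = x + 1 - l by ring, hGx1] at hconv
  calc x ^ l * Gamma (x + 1 - l) < x ^ l * (x ^ (1 - l) * Gamma x) :=
        mul_lt_mul_of_pos_left hconv (rpow_pos_of_pos hx l)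
    _ = Gamma (x + 1) := by
      rw [← mul_assoc, ← rpow_add hx, add_sub_cancel, rpow_one, Gamma_add_one hx.ne']

theorem Gamma_add_lt_rpow_mul_Gamma {y l : ℝ} (hy : 0 < y) (hl0 : 0 < l) (hl1 : l < 1) :
    Gamma (y + l) < y ^ l * Gamma y := by
  have hconv := Gamma_mul_add_mul_lt_rpow_Gamma_mul_rpow_Gamma hy (by linarith : 0 < y + 1)
    (by linarith) (by linarith : 0 < 1 - l) hl0 (by ring)
  have hGy := Gamma_pos_of_pos hy
  rwa [show (1 - l) * y + l * (y + 1) = y + l by ring, Gamma_add_one hy.ne',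
    mul_rpow hy.le hGy.le, mul_left_comm, ← rpow_add hGy, sub_add_cancel, rpow_one] at hconv

theorem rpow_lt_Gamma_add_one_div_Gamma {x l : ℝ} (hx : 0 < x) (hl0 : 0 < l) (hl1 : l < 1) :
    x ^ l < Gamma (x + 1) / Gamma (x + 1 - l) :=
  (lt_div_iff₀ (Gamma_pos_of_pos (by linarith))).2
    (rpow_mul_Gamma_add_one_sub_lt_Gamma_add_one hx hl0 hl1)

theorem Gamma_add_one_div_Gamma_lt_rpow {x l : ℝ} (hx : 0 < x) (hl0 : 0 < l) (hl1 : l < 1) :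
    Gamma (x + 1) / Gamma (x + 1 - l) < (x + 1) ^ l := by
  have hy : 0 < x + 1 - l := by linarith
  rw [div_lt_iff₀ (Gamma_pos_of_pos hy)]
  calc Gamma (x + 1) = Gamma (x + 1 - l + l) := by rw [sub_add_cancel]
    _ < (x + 1 - l) ^ l * Gamma (x + 1 - l) := Gamma_add_lt_rpow_mul_Gamma hy hl0 hl1
    _ < (x + 1) ^ l * Gamma (x + 1 - l) := by
      gcongr
      linarith

end Real

theorem stmt13_general (α : ℝ) (hα : 1 < α) (n k : ℕ) (hkn : k < n) :
    ((n : ℝ) / ((n : ℝ) - k + 1)) ^ (1 / α)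
      < Gamma ((n : ℝ) + 1) * Gamma ((n : ℝ) - k + 1 - 1 / α) /
          (Gamma ((n : ℝ) + 1 - 1 / α) * Gamma ((n : ℝ) - k + 1)) ∧
    Gamma ((n : ℝ) + 1) * Gamma ((n : ℝ) - k + 1 - 1 / α) /
        (Gamma ((n : ℝ) + 1 - 1 / α) * Gamma ((n : ℝ) - k + 1))
      < (((n : ℝ) + 1) / ((n : ℝ) - k)) ^ (1 / α) := by
  set l := 1 / α
  set m := (n : ℝ) - k
  have hl0 : 0 < l := by positivity
  have hl1 : l < 1 := (div_lt_one (by linarith)).2 hα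
  have hm : 0 < m := sub_pos.2 (by exact_mod_cast hkn)
  have hn : (0 : ℝ) < n := by exact_mod_cast (by omega : 0 < n)
  have hquot : Gamma (n + 1) * Gamma (m + 1 - l) / (Gamma (n + 1 - l) * Gamma (m + 1)) =
      (Gamma (n + 1) / Gamma (n + 1 - l)) / (Gamma (m + 1) / Gamma (m + 1 - l)) :=
    (div_div_div_eq _ _ _ _).symm
  have hlowern := rpow_lt_Gamma_add_one_div_Gamma hn hl0 hl1
  have hlowerm := rpow_lt_Gamma_add_one_div_Gamma hm hl0 hl1
  rw [hquot, div_rpow hn.le (by linarith), div_rpow (by linarith) hm.le]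
  exact ⟨div_lt_div₀ hlowern (Gamma_add_one_div_Gamma_lt_rpow hm hl0 hl1).le
      ((rpow_pos_of_pos hn l).trans hlowern).le ((rpow_pos_of_pos hm l).trans hlowerm),
    div_lt_div₀ (Gamma_add_one_div_Gamma_lt_rpow hn hl0 hl1) hlowerm.le
      (by positivity) (by positivity)⟩

/-- Gautschi-type bounds: for `α > 1` and integers `n > k ≥ 1`,
`(n/(n−k+1))^{1/α} < Γ(n+1)Γ(n−k+1−1/α)/(Γ(n+1−1/α)Γ(n−k+1)) < ((n+1)/(n−k))^{1/α}`,
i.e. the expected `k`-th smallest of `n` i.i.d. `Pareto(s, α)` variables lies strictly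
between `s·(n/(n−k+1))^{1/α}` and `s·((n+1)/(n−k))^{1/α}`. -/
theorem stmt13 (α : ℝ) (hα : 1 < α) (n k : ℕ) (hk : 1 ≤ k) (hkn : k < n) :
    ((n : ℝ) / ((n : ℝ) - k + 1)) ^ (1 / α)
      < Gamma ((n : ℝ) + 1) * Gamma ((n : ℝ) - k + 1 - 1 / α) /
          (Gamma ((n : ℝ) + 1 - 1 / α) * Gamma ((n : ℝ) - k + 1)) ∧
    Gamma ((n : ℝ) + 1) * Gamma ((n : ℝ) - k + 1 - 1 / α) /
        (Gamma ((n : ℝ) + 1 - 1 / α) * Gamma ((n : ℝ) - k + 1))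
      < (((n : ℝ) + 1) / ((n : ℝ) - k)) ^ (1 / α) :=
  stmt13_general α hα n k hkn
end

section
/- Fix s > 0 and an integer k ≥ 1. Let r_i, r_j ≥ 1 and α_i, α_j > 0 be reals with r_i·α_i > 1 and r_j·α_j > 1. Define f(r, α) = s·k!·Γ(1 − 1/(rα)) / Γ(k + 1 − 1/(rα)), the expected job latency when each of k tasks runs as r-fold replicas whose per-copy Pareto tail index is α (so that each task's completion time is Pareto(s, rα) and the latency is the expected maximum of k i.i.d. Pareto(s, rα) variables). Then f(r_j, α_j) < f(r_i, α_i) if and only if α_i/α_j < r_j/r_i. -/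
/-!
Since `Γ(u + k) / Γ(u) = u (u + 1) ⋯ (u + k - 1)` is strictly increasing in `u > 0`, and
`u = 1 - 1/(rα)` is strictly increasing in `rα > 1`, the latency strictly decreases in the
product `rα`. So `f(r_j, α_j) < f(r_i, α_i)` exactly when `r_i α_i < r_j α_j`.
-/

open Real Finset
open Set (Ioi mem_Ioi)

namespace Real

theorem Gamma_add_nat_eq_mul_prod {u : ℝ} (hu : 0 < u) (k : ℕ) :
    Gamma (u + k) = Gamma u * ∏ m ∈ range k, (u + m) := by
  induction k with
  | zero => simp
  | succ n ih =>
    rw [Nat.cast_succ, ← add_assoc, Gamma_add_one (by positivity), ih, prod_range_succ]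
    ring

theorem strictMonoOn_prod_range_add {k : ℕ} (hk : k ≠ 0) :
    StrictMonoOn (fun u : ℝ => ∏ m ∈ range k, (u + m)) (Ioi 0) := by
  intro u (hu : 0 < u) v _ huv
  exact prod_lt_prod_of_nonempty (fun m _ => by positivity) (fun m _ => by simpa using huv)
    (nonempty_range_iff.mpr hk)

theorem strictAntiOn_Gamma_div_Gamma_add_nat {k : ℕ} (hk : k ≠ 0) :
    StrictAntiOn (fun u : ℝ => Gamma u / Gamma (u + k)) (Ioi 0) := by
  intro u (hu : 0 < u) v (hv : 0 < v) huv
  have hprod : ∀ {w : ℝ}, 0 < w → Gamma w / Gamma (w + k) = (∏ m ∈ range k, (w + m))⁻¹ :=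
    fun hw => by rw [Gamma_add_nat_eq_mul_prod hw, div_mul_cancel_left₀ (Gamma_pos_of_pos hw).ne']
  dsimp only
  rw [hprod hu, hprod hv]
  exact inv_strictAntiOn (mem_Ioi.mpr (prod_pos fun m _ => by positivity))
    (mem_Ioi.mpr (prod_pos fun m _ => by positivity)) (strictMonoOn_prod_range_add hk hu hv huv)

end Real

/-- Closed form of the expected maximum of `k` i.i.d. `Pareto(s, a)` random variables. -/
noncomputable def paretoMaxMean (s : ℝ) (k : ℕ) (a : ℝ) : ℝ :=
  s * k.factorial * Gamma (1 - 1 / a) / Gamma (k + 1 - 1 / a)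

theorem paretoMaxMean_lt_paretoMaxMean_iff {s : ℝ} (hs : 0 < s) {k : ℕ} (hk : k ≠ 0)
    {a b : ℝ} (ha : 1 < a) (hb : 1 < b) :
    paretoMaxMean s k b < paretoMaxMean s k a ↔ a < b := by
  have hpos : ∀ {x : ℝ}, 1 < x → 1 - 1 / x ∈ Ioi (0 : ℝ) := fun hx => by
    simpa [Set.mem_Ioi, sub_pos] using inv_lt_one_of_one_lt₀ hx
  have hform : ∀ x : ℝ, paretoMaxMean s k x =
      s * k.factorial * (Gamma (1 - 1 / x) / Gamma ((1 - 1 / x) + k)) := fun x => by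
    rw [paretoMaxMean, mul_div_assoc]; ring_nf
  rw [hform, hform, mul_lt_mul_iff_right₀ (by positivity),
    (strictAntiOn_Gamma_div_Gamma_add_nat hk).lt_iff_gt (hpos hb) (hpos ha),
    sub_lt_sub_iff_left, one_div_lt_one_div (by linarith) (by linarith)]

theorem stmt14_general (s : ℝ) (hs : 0 < s) (k : ℕ) (hk : 1 ≤ k)
    (ri rj αi αj : ℝ) (hri : 1 ≤ ri) (hαj : 0 < αj)
    (hi : 1 < ri * αi) (hj : 1 < rj * αj)
    (f : ℝ → ℝ → ℝ)
    (hf : ∀ r α : ℝ, f r α =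
      s * (k.factorial : ℝ) * Gamma (1 - 1 / (r * α)) / Gamma ((k : ℝ) + 1 - 1 / (r * α))) :
    f rj αj < f ri αi ↔ αi / αj < rj / ri := by
  have hfpareto : ∀ r α, f r α = paretoMaxMean s k (r * α) := fun r α => hf r α
  rw [hfpareto, hfpareto, paretoMaxMean_lt_paretoMaxMean_iff hs (by omega) hi hj,
    div_lt_div_iff₀ hαj (by linarith)]
  constructor <;> intro h <;> linarith

/-- With load-dependent tail index, increasing the replication rate from `r_i` to `r_j`
(changing the tail index from `α_i` to `α_j`) reduces the expected latency
`f(r, α) = s·k!·Γ(1 − 1/(rα))/Γ(k + 1 − 1/(rα))` if and only if `α_i/α_j < r_j/r_i`. -/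
theorem stmt14 (s : ℝ) (hs : 0 < s) (k : ℕ) (hk : 1 ≤ k)
    (ri rj αi αj : ℝ) (hri : 1 ≤ ri) (hrj : 1 ≤ rj) (hαi : 0 < αi) (hαj : 0 < αj)
    (hi : 1 < ri * αi) (hj : 1 < rj * αj)
    (f : ℝ → ℝ → ℝ)
    (hf : ∀ r α : ℝ, f r α =
      s * (k.factorial : ℝ) * Gamma (1 - 1 / (r * α)) / Gamma ((k : ℝ) + 1 - 1 / (r * α))) :
    f rj αj < f ri αi ↔ αi / αj < rj / ri :=
  stmt14_general s hs k hk ri rj αi αj hri hαj hi hj f hf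
end

section
/- Fix s > 0 and an integer k ≥ 2. Let n_i, n_j be integers with n_i, n_j ≥ k+1 and let α_i, α_j > 1 be reals. Define g(n, α) = s·Γ(n+1)·Γ(n−k+1−1/α) / ( Γ(n+1−1/α)·Γ(n−k+1) ), the expected k-th smallest of n i.i.d. Pareto(s, α) random variables. Then: (i) if α_i/α_j ≤ log( n_i/(n_i−k+1) ) / log( (n_j+1)/(n_j−k) ), then g(n_j, α_j) < g(n_i, α_i); and (ii) if α_i/α_j ≥ log( (n_i+1)/(n_i−k) ) / log( n_j/(n_j−k+1) ), then g(n_j, α_j) > g(n_i, α_i). -/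
open Real

private lemma gamma_prod_aux (x : ℝ) (hx : 0 < x) (k : ℕ) :
    Gamma (x + k) = Gamma x * ∏ i ∈ Finset.range k, (x + i) := by
  induction k with
  | zero => simp
  | succ k ih =>
    have hxk : x + (k : ℝ) ≠ 0 := by positivity
    have h1 : x + ((k : ℕ) + 1 : ℕ) = (x + k) + 1 := by push_cast; ring
    rw [h1, Gamma_add_one hxk, ih, Finset.prod_range_succ]
    ring

private lemma g_formula_aux (s : ℝ) (k n : ℕ) (hn : k + 1 ≤ n) (β : ℝ)
    (hβ0 : 0 < β) (hβ1 : β < 1) :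
    s * Gamma ((n : ℝ) + 1) * Gamma ((n : ℝ) - k + 1 - β) /
      (Gamma ((n : ℝ) + 1 - β) * Gamma ((n : ℝ) - k + 1)) =
    s * ∏ i ∈ Finset.range k, (((n : ℝ) - k + 1 + i) / ((n : ℝ) - k + 1 + i - β)) := by
  have hnk : ((k : ℝ) + 1) ≤ (n : ℝ) := by exact_mod_cast hn
  set y : ℝ := (n : ℝ) - k + 1 with hy_def
  have hy : 2 ≤ y := by simp only [hy_def]; linarith
  have hy0 : 0 < y := by linarith
  have hyb0 : 0 < y - β := by linarith
  have e1 : (n : ℝ) + 1 = y + k := by simp only [hy_def]; try ring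
  have e2 : (n : ℝ) + 1 - β = (y - β) + k := by simp only [hy_def]; try ring
  rw [e2, e1, gamma_prod_aux y hy0 k, gamma_prod_aux (y - β) hyb0 k]
  have hG1 : Gamma y ≠ 0 := (Gamma_pos_of_pos hy0).ne'
  have hG2 : Gamma (y - β) ≠ 0 := (Gamma_pos_of_pos hyb0).ne'
  have hP2 : ∀ i ∈ Finset.range k, (y - β + (i : ℝ)) ≠ 0 := by
    intro i _
    have : (0 : ℝ) ≤ i := Nat.cast_nonneg i
    positivity
  have hP2' : (∏ i ∈ Finset.range k, (y - β + (i : ℝ))) ≠ 0 :=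
    Finset.prod_ne_zero_iff.mpr hP2
  rw [Finset.prod_congr rfl (fun i _ => by ring_nf :
      ∀ i ∈ Finset.range k, (y + (i : ℝ)) / (y + (i : ℝ) - β)
        = (y + (i : ℝ)) / (y - β + (i : ℝ)))]
  rw [Finset.prod_div_distrib]
  field_simp

private lemma term_bounds_aux (m β : ℝ) (hm : 2 ≤ m) (hβ0 : 0 < β) (hβ1 : β < 1) :
    β * (log (m + 1) - log m) ≤ log m - log (m - β) ∧
    log m - log (m - β) ≤ β * (log m - log (m - 1)) := by
  have hm0 : 0 < m := by linarith
  have hmb : 0 < m - β := by linarith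
  have hm1 : 0 < m - 1 := by linarith
  constructor
  · -- lower bound
    have h1 : log ((m + 1) / m) ≤ (m + 1) / m - 1 :=
      log_le_sub_one_of_pos (by positivity)
    have h2 : log ((m - β) / m) ≤ (m - β) / m - 1 :=
      log_le_sub_one_of_pos (by positivity)
    rw [log_div (by positivity) hm0.ne'] at h1
    rw [log_div hmb.ne' hm0.ne'] at h2
    have e1 : (m + 1) / m - 1 = 1 / m := by field_simp; try ring
    have e2 : (m - β) / m - 1 = -(β / m) := by field_simp; try ring
    rw [e1] at h1; rw [e2] at h2
    have h3 : β * (log (m + 1) - log m) ≤ β * (1 / m) := by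
      apply mul_le_mul_of_nonneg_left h1 hβ0.le
    have h4 : β / m ≤ log m - log (m - β) := by linarith
    calc β * (log (m + 1) - log m) ≤ β * (1 / m) := h3
      _ = β / m := by ring
      _ ≤ log m - log (m - β) := h4
  · -- upper bound via Bernoulli
    have hber : ((1 : ℝ) + -(1 / m)) ^ β ≤ 1 + β * -(1 / m) := by
      apply rpow_one_add_le_one_add_mul_self _ hβ0.le hβ1.le
      have : 1 / m ≤ 1 := by rw [div_le_one hm0]; linarith
      linarith
    have e1 : (1 : ℝ) + -(1 / m) = (m - 1) / m := by field_simp; try ring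
    have e2 : (1 : ℝ) + β * -(1 / m) = (m - β) / m := by field_simp; try ring
    rw [e1, e2] at hber
    have hb0 : (0 : ℝ) < (m - 1) / m := by positivity
    have hlog : log (((m - 1) / m) ^ β) ≤ log ((m - β) / m) :=
      log_le_log (rpow_pos_of_pos hb0 β) hber
    rw [log_rpow hb0, log_div hm1.ne' hm0.ne', log_div hmb.ne' hm0.ne'] at hlog
    nlinarith [hlog]

private lemma sum_bounds_aux (k n : ℕ) (hn : k + 1 ≤ n) (β : ℝ)
    (hβ0 : 0 < β) (hβ1 : β < 1) :
    β * (log ((n : ℝ) + 1) - log ((n : ℝ) - k + 1)) ≤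
      (∑ i ∈ Finset.range k, (log ((n : ℝ) - k + 1 + i) - log ((n : ℝ) - k + 1 + i - β))) ∧
    (∑ i ∈ Finset.range k, (log ((n : ℝ) - k + 1 + i) - log ((n : ℝ) - k + 1 + i - β))) ≤
      β * (log (n : ℝ) - log ((n : ℝ) - k)) := by
  have hnk : ((k : ℝ) + 1) ≤ (n : ℝ) := by exact_mod_cast hn
  set y : ℝ := (n : ℝ) - k + 1 with hy_def
  have hy : 2 ≤ y := by simp only [hy_def]; linarith
  have hmge : ∀ i : ℕ, 2 ≤ y + (i : ℝ) := by
    intro i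
    have : (0 : ℝ) ≤ i := Nat.cast_nonneg i
    linarith
  constructor
  · have h1 : ∑ i ∈ Finset.range k, (β * (log (y + (i : ℝ) + 1) - log (y + (i : ℝ)))) ≤
        ∑ i ∈ Finset.range k, (log (y + (i : ℝ)) - log (y + (i : ℝ) - β)) := by
      apply Finset.sum_le_sum
      intro i _
      exact (term_bounds_aux (y + i) β (hmge i) hβ0 hβ1).1
    refine le_trans (le_of_eq ?_) h1
    rw [← Finset.mul_sum]
    have htel : ∑ i ∈ Finset.range k, (log (y + (i : ℝ) + 1) - log (y + (i : ℝ)))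
        = log (y + (k : ℝ)) - log (y + (0 : ℕ)) := by
      have := Finset.sum_range_sub (fun i : ℕ => log (y + (i : ℝ))) k
      simp only [Nat.cast_add, Nat.cast_one] at this ⊢
      rw [← this]
      apply Finset.sum_congr rfl
      intro i _
      push_cast
      ring_nf
    rw [htel]
    have e1 : y + (k : ℝ) = (n : ℝ) + 1 := by simp only [hy_def]; ring
    have e2 : y + ((0 : ℕ) : ℝ) = (n : ℝ) - k + 1 := by simp only [hy_def]; push_cast; ring
    rw [e1, e2]
  · have h1 : ∑ i ∈ Finset.range k, (log (y + (i : ℝ)) - log (y + (i : ℝ) - β)) ≤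
        ∑ i ∈ Finset.range k, (β * (log (y + (i : ℝ)) - log (y + (i : ℝ) - 1))) := by
      apply Finset.sum_le_sum
      intro i _
      exact (term_bounds_aux (y + i) β (hmge i) hβ0 hβ1).2
    refine h1.trans (le_of_eq ?_)
    rw [← Finset.mul_sum]
    have htel : ∑ i ∈ Finset.range k, (log (y + (i : ℝ)) - log (y + (i : ℝ) - 1))
        = log (y + (k : ℝ) - 1) - log (y + ((0 : ℕ) : ℝ) - 1) := by
      have := Finset.sum_range_sub (fun i : ℕ => log (y + (i : ℝ) - 1)) k
      rw [← this]
      apply Finset.sum_congr rfl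
      intro i _
      push_cast
      ring_nf
    rw [htel]
    have e1 : y + (k : ℝ) - 1 = (n : ℝ) := by simp only [hy_def]; ring
    have e2 : y + ((0 : ℕ) : ℝ) - 1 = (n : ℝ) - k := by simp only [hy_def]; push_cast; ring
    rw [e1, e2]

/-- Main comparison: if `βj * (log(nj+1) - log(nj-k)) ≤ βi * (log ni - log(ni-k+1))`
then the log-sum for `(nj, βj)` is strictly less than that for `(ni, βi)`. -/
private lemma main_aux (k : ℕ) (hk : 2 ≤ k) (ni nj : ℕ) (hni : k + 1 ≤ ni) (hnj : k + 1 ≤ nj)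
    (βi βj : ℝ) (hβi0 : 0 < βi) (hβi1 : βi < 1) (hβj0 : 0 < βj) (hβj1 : βj < 1)
    (h : βj * (log ((nj : ℝ) + 1) - log ((nj : ℝ) - k)) ≤
         βi * (log (ni : ℝ) - log ((ni : ℝ) - k + 1))) :
    (∑ i ∈ Finset.range k, (log ((nj : ℝ) - k + 1 + i) - log ((nj : ℝ) - k + 1 + i - βj))) <
    (∑ i ∈ Finset.range k, (log ((ni : ℝ) - k + 1 + i) - log ((ni : ℝ) - k + 1 + i - βi))) := by
  have hnik : ((k : ℝ) + 1) ≤ (ni : ℝ) := by exact_mod_cast hni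
  have hnjk : ((k : ℝ) + 1) ≤ (nj : ℝ) := by exact_mod_cast hnj
  have hkr : (2 : ℝ) ≤ k := by exact_mod_cast hk
  have hup := (sum_bounds_aux k nj hnj βj hβj0 hβj1).2
  have hlo := (sum_bounds_aux k ni hni βi hβi0 hβi1).1
  have h1 : log (nj : ℝ) < log ((nj : ℝ) + 1) :=
    log_lt_log (by linarith) (by linarith)
  have h2 : log ((ni : ℝ)) < log ((ni : ℝ) + 1) :=
    log_lt_log (by linarith) (by linarith)
  have h3 : βj * (log (nj : ℝ) - log ((nj : ℝ) - k)) <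
      βj * (log ((nj : ℝ) + 1) - log ((nj : ℝ) - k)) := by
    apply mul_lt_mul_of_pos_left (by linarith) hβj0
  have h4 : βi * (log (ni : ℝ) - log ((ni : ℝ) - k + 1)) <
      βi * (log ((ni : ℝ) + 1) - log ((ni : ℝ) - k + 1)) := by
    apply mul_lt_mul_of_pos_left (by linarith) hβi0
  linarith

set_option maxHeartbeats 1000000 in
/-- With load-dependent tail index, sufficient conditions for a change of coding-based
expansion level from `n_i` (tail index `α_i`) to `n_j` (tail index `α_j`) to reduce,
respectively increase, the expected latency
`g(n, α) = s·Γ(n+1)·Γ(n−k+1−1/α)/(Γ(n+1−1/α)·Γ(n−k+1))`. -/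
theorem stmt15 (s : ℝ) (hs : 0 < s) (k : ℕ) (hk : 2 ≤ k)
    (ni nj : ℕ) (hni : k + 1 ≤ ni) (hnj : k + 1 ≤ nj)
    (αi αj : ℝ) (hαi : 1 < αi) (hαj : 1 < αj)
    (g : ℕ → ℝ → ℝ)
    (hg : ∀ (n : ℕ) (α : ℝ), g n α =
      s * Gamma ((n : ℝ) + 1) * Gamma ((n : ℝ) - k + 1 - 1 / α) /
        (Gamma ((n : ℝ) + 1 - 1 / α) * Gamma ((n : ℝ) - k + 1))) :
    (αi / αj ≤ log ((ni : ℝ) / ((ni : ℝ) - k + 1)) / log (((nj : ℝ) + 1) / ((nj : ℝ) - k)) →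
      g nj αj < g ni αi) ∧
    (αi / αj ≥ log (((ni : ℝ) + 1) / ((ni : ℝ) - k)) / log ((nj : ℝ) / ((nj : ℝ) - k + 1)) →
      g nj αj > g ni αi) := by
  have hkr : (2 : ℝ) ≤ k := by exact_mod_cast hk
  have hnik : ((k : ℝ) + 1) ≤ (ni : ℝ) := by exact_mod_cast hni
  have hnjk : ((k : ℝ) + 1) ≤ (nj : ℝ) := by exact_mod_cast hnj
  have hαi0 : 0 < αi := by linarith
  have hαj0 : 0 < αj := by linarith
  set βi : ℝ := 1 / αi with hβi_def
  set βj : ℝ := 1 / αj with hβj_def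
  have hβi0 : 0 < βi := by positivity
  have hβj0 : 0 < βj := by positivity
  have hβi1 : βi < 1 := by rw [hβi_def, div_lt_one hαi0]; linarith
  have hβj1 : βj < 1 := by rw [hβj_def, div_lt_one hαj0]; linarith
  -- g as product, and comparison via logs
  have hgP : ∀ (n : ℕ), k + 1 ≤ n → ∀ β : ℝ, 0 < β → β < 1 →
      (s * Gamma ((n : ℝ) + 1) * Gamma ((n : ℝ) - k + 1 - β) /
        (Gamma ((n : ℝ) + 1 - β) * Gamma ((n : ℝ) - k + 1)))
      = s * ∏ i ∈ Finset.range k, (((n : ℝ) - k + 1 + i) / ((n : ℝ) - k + 1 + i - β)) :=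
    fun n hn β hβ0 hβ1 => g_formula_aux s k n hn β hβ0 hβ1
  have hterm_pos : ∀ (n : ℕ), k + 1 ≤ n → ∀ β : ℝ, 0 < β → β < 1 →
      ∀ i ∈ Finset.range k, 0 < ((n : ℝ) - k + 1 + i) / ((n : ℝ) - k + 1 + i - β) := by
    intro n hn β hβ0 hβ1 i _
    have hnk : ((k : ℝ) + 1) ≤ (n : ℝ) := by exact_mod_cast hn
    have hi : (0 : ℝ) ≤ i := Nat.cast_nonneg i
    have h1 : 0 < (n : ℝ) - k + 1 + i := by linarith
    have h2 : 0 < (n : ℝ) - k + 1 + i - β := by linarith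
    positivity
  have hP_pos : ∀ (n : ℕ), k + 1 ≤ n → ∀ β : ℝ, 0 < β → β < 1 →
      0 < ∏ i ∈ Finset.range k, (((n : ℝ) - k + 1 + i) / ((n : ℝ) - k + 1 + i - β)) := by
    intro n hn β hβ0 hβ1
    exact Finset.prod_pos (hterm_pos n hn β hβ0 hβ1)
  have hlogP : ∀ (n : ℕ), k + 1 ≤ n → ∀ β : ℝ, 0 < β → β < 1 →
      log (∏ i ∈ Finset.range k, (((n : ℝ) - k + 1 + i) / ((n : ℝ) - k + 1 + i - β)))
      = ∑ i ∈ Finset.range k, (log ((n : ℝ) - k + 1 + i) - log ((n : ℝ) - k + 1 + i - β)) := by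
    intro n hn β hβ0 hβ1
    rw [log_prod (fun i hi => (hterm_pos n hn β hβ0 hβ1 i hi).ne')]
    apply Finset.sum_congr rfl
    intro i hi
    have hnk : ((k : ℝ) + 1) ≤ (n : ℝ) := by exact_mod_cast hn
    have hic : (0 : ℝ) ≤ i := Nat.cast_nonneg i
    rw [log_div (by linarith : (0:ℝ) < (n : ℝ) - k + 1 + i).ne'
      (by linarith : (0:ℝ) < (n : ℝ) - k + 1 + i - β).ne']
  -- From strict sum inequality to g comparison
  have hcmp : ∀ (h : (∑ i ∈ Finset.range k,
        (log ((nj : ℝ) - k + 1 + i) - log ((nj : ℝ) - k + 1 + i - βj))) <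
      (∑ i ∈ Finset.range k,
        (log ((ni : ℝ) - k + 1 + i) - log ((ni : ℝ) - k + 1 + i - βi)))),
      g nj αj < g ni αi := by
    intro h
    rw [hg ni αi, hg nj αj, ← hβi_def, ← hβj_def,
      hgP ni hni βi hβi0 hβi1, hgP nj hnj βj hβj0 hβj1]
    apply mul_lt_mul_of_pos_left _ hs
    rw [← log_lt_log_iff (hP_pos nj hnj βj hβj0 hβj1) (hP_pos ni hni βi hβi0 hβi1),
      hlogP ni hni βi hβi0 hβi1, hlogP nj hnj βj hβj0 hβj1]
    exact h
  have hcmp' : ∀ (h : (∑ i ∈ Finset.range k,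
        (log ((ni : ℝ) - k + 1 + i) - log ((ni : ℝ) - k + 1 + i - βi))) <
      (∑ i ∈ Finset.range k,
        (log ((nj : ℝ) - k + 1 + i) - log ((nj : ℝ) - k + 1 + i - βj)))),
      g nj αj > g ni αi := by
    intro h
    rw [hg ni αi, hg nj αj, ← hβi_def, ← hβj_def,
      hgP ni hni βi hβi0 hβi1, hgP nj hnj βj hβj0 hβj1]
    apply mul_lt_mul_of_pos_left _ hs
    rw [← log_lt_log_iff (hP_pos ni hni βi hβi0 hβi1) (hP_pos nj hnj βj hβj0 hβj1),
      hlogP ni hni βi hβi0 hβi1, hlogP nj hnj βj hβj0 hβj1]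
    exact h
  -- positivity of the characteristic logs
  have hAi_pos : 0 < log ((ni : ℝ) / ((ni : ℝ) - k + 1)) := by
    apply log_pos
    rw [lt_div_iff₀ (by linarith)]
    linarith
  have hBj_pos : 0 < log (((nj : ℝ) + 1) / ((nj : ℝ) - k)) := by
    apply log_pos
    rw [lt_div_iff₀ (by linarith)]
    linarith
  have hAi'_pos : 0 < log (((ni : ℝ) + 1) / ((ni : ℝ) - k)) := by
    apply log_pos
    rw [lt_div_iff₀ (by linarith)]
    linarith
  have hBj'_pos : 0 < log ((nj : ℝ) / ((nj : ℝ) - k + 1)) := by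
    apply log_pos
    rw [lt_div_iff₀ (by linarith)]
    linarith
  constructor
  · intro hyp
    apply hcmp
    apply main_aux k hk ni nj hni hnj βi βj hβi0 hβi1 hβj0 hβj1
    -- turn hyp into βj * B ≤ βi * A
    rw [div_le_div_iff₀ hαj0 hBj_pos] at hyp
    have hA : log ((ni : ℝ) / ((ni : ℝ) - k + 1)) = log (ni : ℝ) - log ((ni : ℝ) - k + 1) :=
      log_div (by linarith : (0:ℝ) < (ni : ℝ)).ne' (by linarith : (0:ℝ) < (ni : ℝ) - k + 1).ne'
    have hB : log (((nj : ℝ) + 1) / ((nj : ℝ) - k)) = log ((nj : ℝ) + 1) - log ((nj : ℝ) - k) :=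
      log_div (by linarith : (0:ℝ) < (nj : ℝ) + 1).ne' (by linarith : (0:ℝ) < (nj : ℝ) - k).ne'
    rw [hA, hB] at hyp
    rw [hβi_def, hβj_def, div_mul_eq_mul_div, div_mul_eq_mul_div,
      div_le_div_iff₀ hαj0 hαi0]
    nlinarith [hyp]
  · intro hyp
    apply hcmp'
    apply main_aux k hk nj ni hnj hni βj βi hβj0 hβj1 hβi0 hβi1
    rw [ge_iff_le, div_le_div_iff₀ hBj'_pos hαj0] at hyp
    have hA : log (((ni : ℝ) + 1) / ((ni : ℝ) - k)) = log ((ni : ℝ) + 1) - log ((ni : ℝ) - k) :=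
      log_div (by linarith : (0:ℝ) < (ni : ℝ) + 1).ne' (by linarith : (0:ℝ) < (ni : ℝ) - k).ne'
    have hB : log ((nj : ℝ) / ((nj : ℝ) - k + 1)) = log (nj : ℝ) - log ((nj : ℝ) - k + 1) :=
      log_div (by linarith : (0:ℝ) < (nj : ℝ)).ne' (by linarith : (0:ℝ) < (nj : ℝ) - k + 1).ne'
    rw [hA, hB] at hyp
    rw [hβi_def, hβj_def, div_mul_eq_mul_div, div_mul_eq_mul_div,
      div_le_div_iff₀ hαi0 hαj0]
    nlinarith [hyp]
end

section
/- Let k ≥ 2 be an integer and α > 1 a real number with k > 4^α (equivalently, α < ln(k)/ln(4)). Then k!·Γ(1−1/α)/Γ(k+1−1/α) > 4; that is, the expected maximum of k i.i.d. Pareto(s, α) random variables exceeds 4s for every s > 0. -/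
open Real

lemma one_le_Gamma_aux {β : ℝ} (hβ0 : 0 < β) (hβ1 : β < 1) : 1 ≤ Gamma β := by
  set t : ℝ := 1 / (2 - β) with ht
  have h2β : 0 < 2 - β := by linarith
  have ht0 : 0 < t := by positivity
  have ht1 : 0 < 1 - t := by
    rw [ht, sub_pos, div_lt_one h2β]; linarith
  have hsum : t + (1 - t) = 1 := by ring
  have hcomb : t * β + (1 - t) * 2 = 1 := by
    have h' : t * (2 - β) = 1 := by rw [ht, one_div, inv_mul_cancel₀ h2β.ne']
    linear_combination -h'
  have h := Real.Gamma_mul_add_mul_le_rpow_Gamma_mul_rpow_Gamma hβ0 (by norm_num : (0:ℝ) < 2)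
    ht0 ht1 hsum
  rw [hcomb, Real.Gamma_one, Real.Gamma_two, Real.one_rpow, mul_one] at h
  by_contra hlt
  push_neg at hlt
  have := Real.rpow_lt_one (Real.Gamma_pos_of_pos hβ0).le hlt ht0
  linarith

/-- If `k > 4^α` (i.e. `α < ln k / ln 4`), then the expected maximum of `k` i.i.d.
`Pareto(s, α)` random variables, `s·k!·Γ(1−1/α)/Γ(k+1−1/α)`, exceeds `4s`:
`k!·Γ(1−1/α)/Γ(k+1−1/α) > 4`. -/
theorem stmt19 (k : ℕ) (hk : 2 ≤ k) (α : ℝ) (hα : 1 < α)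
    (hcond : (4 : ℝ) ^ α < k) :
    (k.factorial : ℝ) * Gamma (1 - 1 / α) / Gamma ((k : ℝ) + 1 - 1 / α) > 4 ∧
    ∀ s : ℝ, 0 < s →
      s * (k.factorial : ℝ) * Gamma (1 - 1 / α) / Gamma ((k : ℝ) + 1 - 1 / α) > 4 * s := by
  set β : ℝ := 1 - 1 / α with hβ
  have hα0 : 0 < α := by linarith
  have hia : 0 < 1 / α := by positivity
  have hia1 : 1 / α < 1 := by rw [div_lt_one hα0]; exact hα
  have hβ0 : 0 < β := by rw [hβ]; linarith
  have hβ1 : β < 1 := by rw [hβ]; linarith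
  have hk0 : 0 < (k : ℝ) := by positivity
  have hk1 : 1 < (k : ℝ) := by exact_mod_cast Nat.lt_of_lt_of_le one_lt_two hk
  have hden : (k : ℝ) + 1 - 1 / α = (k : ℝ) + β := by rw [hβ]; ring
  -- log-convexity: Γ(k+β) ≤ Γ(k+1)^β * Γ(k)^(1-β)
  have hconv := Real.Gamma_mul_add_mul_le_rpow_Gamma_mul_rpow_Gamma
    (by positivity : (0:ℝ) < (k : ℝ) + 1) hk0 hβ0 (by linarith : 0 < 1 - β)
    (by ring : β + (1 - β) = 1)
  have hcombo : β * ((k : ℝ) + 1) + (1 - β) * (k : ℝ) = (k : ℝ) + β := by ring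
  rw [hcombo] at hconv
  have hGk1 : Gamma ((k : ℝ) + 1) = k.factorial := Real.Gamma_nat_eq_factorial k
  have hGk : Gamma (k : ℝ) = (k - 1).factorial := by
    have h1 : (1 : ℕ) ≤ k := by omega
    have : ((k - 1 : ℕ) : ℝ) + 1 = (k : ℝ) := by
      push_cast [Nat.cast_sub h1]; ring
    rw [← this, Real.Gamma_nat_eq_factorial]
  rw [hGk1, hGk] at hconv
  have hfact : (k.factorial : ℝ) = k * (k - 1).factorial := by
    rw [← Nat.succ_pred_eq_of_pos (by omega : 0 < k)]
    push_cast [Nat.factorial_succ]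
    simp [Nat.succ_pred_eq_of_pos (by omega : 0 < k)]
  have hfpos : (0:ℝ) < ((k-1).factorial : ℝ) := by positivity
  have hkk : (k : ℝ) * (k : ℝ) ^ (β - 1) = (k : ℝ) ^ β := by
    rw [Real.rpow_sub hk0, Real.rpow_one]
    field_simp
  have hbound : Gamma ((k : ℝ) + β) ≤ (k.factorial : ℝ) * (k : ℝ) ^ (β - 1) := by
    calc Gamma ((k : ℝ) + β) ≤ (k.factorial : ℝ) ^ β * ((k-1).factorial : ℝ) ^ (1 - β) :=
          hconv
      _ = (k : ℝ) ^ β * ((k-1).factorial : ℝ) := by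
          rw [hfact, Real.mul_rpow hk0.le hfpos.le, mul_assoc, ← Real.rpow_add hfpos]
          simp
      _ = (k.factorial : ℝ) * (k : ℝ) ^ (β - 1) := by
          rw [hfact]
          rw [mul_comm ((k:ℝ)) ((k-1).factorial : ℝ), mul_assoc, hkk, mul_comm]
  have hGpos : 0 < Gamma ((k : ℝ) + β) := Real.Gamma_pos_of_pos (by positivity)
  have hGβ : 1 ≤ Gamma β := one_le_Gamma_aux hβ0 hβ1
  have hnum : (0:ℝ) ≤ (k.factorial : ℝ) * Gamma β := by positivity
  have hbpos : (0:ℝ) < (k.factorial : ℝ) * (k : ℝ) ^ (β - 1) := by positivity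
  -- 4 < k^(1/α)
  have h4 : (4:ℝ) < (k : ℝ) ^ (1 / α) := by
    have h1 : ((4:ℝ) ^ α) ^ (1/α) < (k : ℝ) ^ (1/α) :=
      Real.rpow_lt_rpow (by positivity) hcond hia
    rwa [← Real.rpow_mul (by norm_num : (0:ℝ) ≤ 4), mul_one_div, div_self (by linarith : α ≠ 0),
      Real.rpow_one] at h1
  have hexpand : (k.factorial : ℝ) * Gamma β / ((k.factorial : ℝ) * (k : ℝ) ^ (β - 1))
      = Gamma β * (k : ℝ) ^ (1 / α) := by
    have hfk : (0:ℝ) < (k.factorial : ℝ) := by positivity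
    rw [mul_div_mul_left _ _ (ne_of_gt hfk)]
    rw [div_eq_mul_inv, ← Real.rpow_neg hk0.le]
    congr 1
    rw [hβ]; ring
  have hmain : (k.factorial : ℝ) * Gamma (1 - 1/α) / Gamma ((k : ℝ) + 1 - 1/α) > 4 := by
    rw [hden]
    calc (4:ℝ) < (k : ℝ) ^ (1/α) := h4
      _ ≤ Gamma β * (k : ℝ) ^ (1/α) := by
          nth_rewrite 1 [← one_mul ((k : ℝ) ^ (1/α))]
          exact mul_le_mul_of_nonneg_right hGβ (by positivity)
      _ = (k.factorial : ℝ) * Gamma β / ((k.factorial : ℝ) * (k : ℝ) ^ (β - 1)) :=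
          hexpand.symm
      _ ≤ (k.factorial : ℝ) * Gamma β / Gamma ((k : ℝ) + β) :=
          div_le_div_of_nonneg_left hnum hGpos hbound
  refine ⟨hmain, fun s hs => ?_⟩
  have : s * (k.factorial : ℝ) * Gamma (1 - 1/α) / Gamma ((k : ℝ) + 1 - 1/α)
      = s * ((k.factorial : ℝ) * Gamma (1 - 1/α) / Gamma ((k : ℝ) + 1 - 1/α)) := by
    ring
  rw [this]
  calc 4 * s = s * 4 := by ring
    _ < s * ((k.factorial : ℝ) * Gamma (1 - 1/α) / Gamma ((k : ℝ) + 1 - 1/α)) :=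
      (mul_lt_mul_iff_right₀ hs).mpr hmain
end
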